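/- arXiv:1403.4101 — 6 statements merged into one kernel-verified Lean document; each statement's English description precedes it below -/
import Mathlib

section
/- Let x(t) > 0 be a differentiable scalar function of t ∈ ℝ satisfying ẋ(t) ≤ −a x(t) + b sup_{t−τ ≤ s ≤ t} x(s) for t ≥ t₀, and x(t) = ψ(t) for t ≤ t₀, where a > b > 0 are constants, τ > 0, and ψ(t) ≥ 0 is continuous and bounded for t ≤ t₀. Then there exist constants k > 0 and γ > 0 such that x(t) ≤ k e^{−γ(t−t₀)} for all t ≥ t₀; in particular x(t) → 0 as t → ∞. -/
open Filter Set Real Topology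

lemma deriv_nonneg_right (h : ℝ → ℝ) (t₁ d : ℝ) (hd : HasDerivAt h d t₁)
    (h0 : h t₁ = 0) (S : Set ℝ) (hS : ∀ s ∈ S, t₁ < s ∧ 0 < h s)
    (hcl : t₁ ∈ closure S) : 0 ≤ d := by
  have hne : (𝓝[S] t₁).NeBot := mem_closure_iff_nhdsWithin_neBot.1 hcl
  have hsub : S ⊆ {t₁}ᶜ := fun s hs => Set.mem_compl_singleton_iff.2 (hS s hs).1.ne'
  have htend : Tendsto (slope h t₁) (𝓝[S] t₁) (𝓝 d) :=
    (hasDerivAt_iff_tendsto_slope.1 hd).mono_left (nhdsWithin_mono _ hsub)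
  refine ge_of_tendsto htend ?_
  filter_upwards [self_mem_nhdsWithin] with s hs
  obtain ⟨h1, h2⟩ := hS s hs
  rw [slope_def_field, h0, sub_zero]
  exact div_nonneg h2.le (by linarith)

/-- **Classical Halanay inequality.** If `x > 0` is differentiable and satisfies
`ẋ(t) ≤ -a x(t) + b sup_{t-τ ≤ s ≤ t} x(s)` for `t ≥ t₀`, with `x = ψ` on `(-∞, t₀]`,
where `a > b > 0`, `τ > 0`, and `ψ ≥ 0` is continuous and bounded on `(-∞, t₀]`,
then `x` decays exponentially; in particular `x(t) → 0` as `t → ∞`. -/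
theorem halanay_classical (a b τ t₀ : ℝ) (x ψ : ℝ → ℝ)
    (hb : 0 < b) (hab : b < a) (hτ : 0 < τ)
    (hxpos : ∀ t : ℝ, 0 < x t) (hxdiff : Differentiable ℝ x)
    (hψnn : ∀ t ≤ t₀, 0 ≤ ψ t)
    (hψcont : ContinuousOn ψ (Set.Iic t₀))
    (hψbdd : ∃ B : ℝ, ∀ t ≤ t₀, ψ t ≤ B)
    (hinit : ∀ t ≤ t₀, x t = ψ t)
    (hineq : ∀ t ≥ t₀, deriv x t ≤ -a * x t + b * sSup (x '' Set.Icc (t - τ) t)) :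
    (∃ k > (0 : ℝ), ∃ γ > (0 : ℝ), ∀ t ≥ t₀, x t ≤ k * Real.exp (-γ * (t - t₀))) ∧
      Filter.Tendsto x Filter.atTop (nhds 0) := by
  obtain ⟨B, hB⟩ := hψbdd
  have hB0 : 0 ≤ B := le_trans (hψnn t₀ le_rfl) (hB t₀ le_rfl)
  have hxB : ∀ t ≤ t₀, x t ≤ B := fun t ht => (hinit t ht) ▸ hB t ht
  -- choose γ
  obtain ⟨γ, hγ, hγ0⟩ : ∃ γ, γ + b * Real.exp (γ * τ) < a ∧ 0 < γ := by
    have hc : ContinuousAt (fun γ : ℝ => γ + b * Real.exp (γ * τ)) 0 := by fun_prop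
    have h0 : (0:ℝ) + b * Real.exp (0 * τ) < a := by simpa using hab
    have hev : ∀ᶠ γ in 𝓝 (0:ℝ), γ + b * Real.exp (γ * τ) < a :=
      Filter.Tendsto.eventually_lt_const (by simpa using hab) hc
    have hev' : ∀ᶠ γ in 𝓝[>] (0:ℝ), γ + b * Real.exp (γ * τ) < a :=
      hev.filter_mono nhdsWithin_le_nhds
    exact (hev'.and self_mem_nhdsWithin).exists
  set k := B + 1 with hk
  have hkpos : 0 < k := by positivity
  set g : ℝ → ℝ := fun t => k * Real.exp (-γ * (t - t₀)) with hg
  have hgpos : ∀ t, 0 < g t := fun t => by positivity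
  have hgd : ∀ t, HasDerivAt g (k * (Real.exp (-γ * (t - t₀)) * -γ)) t := by
    intro t
    have h1 : HasDerivAt (fun t : ℝ => -γ * (t - t₀)) (-γ * 1) t :=
      ((hasDerivAt_id t).sub_const t₀).const_mul (-γ)
    have h2 := h1.exp.const_mul k
    simpa only [mul_one] using h2
  -- main claim
  have main : ∀ t ≥ t₀, x t ≤ g t := by
    by_contra hcon
    push_neg at hcon
    set S : Set ℝ := {t | t₀ ≤ t ∧ g t < x t} with hS
    have hSne : S.Nonempty := by obtain ⟨t, ht, h⟩ := hcon; exact ⟨t, ht, h⟩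
    have hSbdd : BddBelow S := ⟨t₀, fun s hs => hs.1⟩
    set t₁ := sInf S with ht₁
    have ht₁ge : t₀ ≤ t₁ := le_csInf hSne (fun s hs => hs.1)
    have hcl : t₁ ∈ closure S := csInf_mem_closure hSne hSbdd
    have hcontx : Continuous x := hxdiff.continuous
    have hcontg : Continuous g := by fun_prop
    -- h := x - g nonneg at t₁
    have hge : g t₁ ≤ x t₁ := by
      have hclosed : IsClosed {t | g t ≤ x t} := isClosed_le hcontg hcontx
      have : closure S ⊆ {t | g t ≤ x t} :=
        hclosed.closure_subset_iff.2 (fun s hs => hs.2.le)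
      exact this hcl
    have ht₀lt : t₀ < t₁ := by
      rcases lt_or_eq_of_le ht₁ge with h | h
      · exact h
      · exfalso
        have h1 : x t₀ ≤ B := hxB t₀ le_rfl
        have h2 : g t₀ = k := by simp [hg]
        rw [← h] at hge
        rw [h2] at hge
        linarith
    have hpre : ∀ s, t₀ ≤ s → s < t₁ → x s ≤ g s := by
      intro s hs0 hs1
      by_contra hc
      push_neg at hc
      exact absurd (csInf_le hSbdd ⟨hs0, hc⟩) (not_le.2 hs1)
    have hle : x t₁ ≤ g t₁ := by
      have hclosed : IsClosed {t | x t ≤ g t} := isClosed_le hcontx hcontg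
      have hsub : Set.Ico t₀ t₁ ⊆ {t | x t ≤ g t} := fun s hs => hpre s hs.1 hs.2
      have : t₁ ∈ closure (Set.Ico t₀ t₁) := by
        rw [closure_Ico ht₀lt.ne]
        exact ⟨ht₀lt.le, le_rfl⟩
      exact hclosed.closure_subset_iff.2 hsub this
    have heq : x t₁ = g t₁ := le_antisymm hle hge
    -- bound the sup
    set E := Real.exp (-γ * (t₁ - t₀)) with hE
    have hEpos : 0 < E := Real.exp_pos _
    have hub : ∀ s ∈ Set.Icc (t₁ - τ) t₁, x s ≤ k * (E * Real.exp (γ * τ)) := by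
      intro s hs
      have hEeq : E * Real.exp (γ * τ) = Real.exp (-γ * (t₁ - τ - t₀)) := by
        rw [hE, ← Real.exp_add]; ring_nf
      rw [hEeq]
      rcases le_or_gt s t₀ with hst | hst
      · have h1 : x s ≤ B := hxB s hst
        have h2 : (1:ℝ) ≤ Real.exp (-γ * (t₁ - τ - t₀)) := by
          rw [← Real.exp_zero]
          apply Real.exp_le_exp.2
          nlinarith [hs.1]
        nlinarith
      · have h1 : x s ≤ g s := by
          rcases lt_or_eq_of_le hs.2 with h | h
          · exact hpre s hst.le h
          · rw [h, heq]
        have h2 : g s ≤ k * Real.exp (-γ * (t₁ - τ - t₀)) := by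
          apply mul_le_mul_of_nonneg_left _ hkpos.le
          apply Real.exp_le_exp.2
          nlinarith [hs.1]
        linarith
    have hsup : sSup (x '' Set.Icc (t₁ - τ) t₁) ≤ k * (E * Real.exp (γ * τ)) := by
      apply csSup_le
      · exact (Set.nonempty_Icc.2 (by linarith)).image x
      · rintro y ⟨s, hs, rfl⟩; exact hub s hs
    -- derivative upper bound
    have hd1 : deriv x t₁ ≤ k * E * (-a + b * Real.exp (γ * τ)) := by
      have := hineq t₁ ht₁ge
      have h2 : -a * x t₁ = -a * (k * E) := by rw [heq]
      calc deriv x t₁ ≤ -a * x t₁ + b * sSup (x '' Set.Icc (t₁ - τ) t₁) := this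
        _ ≤ -a * (k * E) + b * (k * (E * Real.exp (γ * τ))) := by
            rw [h2]; have := mul_le_mul_of_nonneg_left hsup hb.le; linarith
        _ = k * E * (-a + b * Real.exp (γ * τ)) := by ring
    -- derivative lower bound via helper
    have hd2 : k * (E * -γ) ≤ deriv x t₁ := by
      have hxd : HasDerivAt x (deriv x t₁) t₁ := (hxdiff t₁).hasDerivAt
      have hhd : HasDerivAt (fun t => x t - g t) (deriv x t₁ - k * (E * -γ)) t₁ :=
        hxd.sub (hgd t₁)
      have h0 : x t₁ - g t₁ = 0 := by rw [heq]; ring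
      have := deriv_nonneg_right (fun t => x t - g t) t₁ _ hhd h0 S
        (fun s hs => by
          have hs' : t₀ ≤ s ∧ g s < x s := hs
          refine ⟨lt_of_le_of_ne (csInf_le hSbdd hs) ?_, show 0 < x s - g s by linarith [hs'.2]⟩
          rintro rfl
          exact absurd heq (ne_of_gt hs'.2)) hcl
      linarith
    have h3 : k * (E * -γ) ≤ k * E * (-a + b * Real.exp (γ * τ)) := le_trans hd2 hd1
    nlinarith [mul_pos hkpos hEpos]
  refine ⟨⟨k, hkpos, γ, hγ0, main⟩, ?_⟩
  -- tendsto 0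
  have h1 : Tendsto g atTop (𝓝 0) := by
    have h2 : Tendsto (fun t : ℝ => -γ * (t - t₀)) atTop atBot := by
      apply Tendsto.const_mul_atTop_of_neg (by linarith : -γ < 0)
      exact tendsto_atTop_add_const_right _ _ tendsto_id
    have h3 : Tendsto (fun t : ℝ => Real.exp (-γ * (t - t₀))) atTop (𝓝 0) :=
      Real.tendsto_exp_atBot.comp h2
    have h4 := h3.const_mul k
    rw [mul_zero] at h4
    exact h4
  apply tendsto_of_tendsto_of_tendsto_of_le_of_le' tendsto_const_nhds h1
  · exact Eventually.of_forall (fun t => (hxpos t).le)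
  · filter_upwards [eventually_ge_atTop t₀] with t ht using main t ht
end

section
/- If μ_−(0, +∞) = 0 and there exists η > 0 such that μ_η(0, +∞) = +∞, then the zero solution of any system governed by the delay inequality D⁺|x(t)| ≤ −a(t)|x(t)| + b(t) sup_{t−τ_max ≤ s ≤ t} |x(s)| is asymptotically stable: every solution x(t) satisfies x(t) → 0 as t → ∞. -/
/-!
Write `P t = sup_{[t - τ, t]} |x|`. Off the null set where `a < |b|` the inequality gives
`D⁺|x| ≤ a (P - |x|)`, and a comparison principle for Dini derivatives (the exceptional null
set is absorbed by an open cover of small measure) shows that `P` is nonincreasing and that a dip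
of `|x|` below `P` is felt by `P` one delay later, up to the factor `e^{-2 Ma τ}`. Hence `P ↓ L`,
`|x| → L` and `∫₀^∞ (P - |x|) < ∞`. If `L > 0`, the function `Ma ∫₀ᵘ (P - |x|) - |x u|` is
bounded and nondecreasing, yet on `S_η ∩ (T, ∞)` its derivative, wherever it exists, is at least
`η L / 2`; by Lebesgue's differentiation theorem for monotone functions this forces
`μ_η(0, ∞) < ∞`.
-/

open Filter MeasureTheory Set Topology

/-- Upper right Dini derivative `D⁺f(t) = limsup_{h → 0⁺} (f(t+h) - f(t))/h`. -/
noncomputable def DiniUpper (f : ℝ → ℝ) (t : ℝ) : EReal :=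
  Filter.limsup (fun h : ℝ => (((f (t + h) - f t) / h : ℝ) : EReal))
    (nhdsWithin 0 (Set.Ioi 0))

theorem HasDerivAt.diniUpper_eq {f : ℝ → ℝ} {d x : ℝ} (h : HasDerivAt f d x) :
    DiniUpper f x = d := by
  refine ((continuous_coe_real_ereal.tendsto d).comp (h.tendsto_slope_zero_right.congr
    fun t => ?_)).limsup_eq
  rw [smul_eq_mul, div_eq_inv_mul]

theorem eventually_slope_lt_of_diniUpper_lt {f : ℝ → ℝ} {x : ℝ} {r : ℝ}
    (h : DiniUpper f x < r) : ∀ᶠ z in 𝓝[>] x, slope f x z < r := by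
  have hshift : Tendsto (fun z => z - x) (𝓝[>] x) (𝓝[>] 0) := by
    refine tendsto_nhdsWithin_of_tendsto_nhds_of_eventually_within _ ?_ ?_
    · simpa using ((continuous_sub_right x).tendsto x).mono_left nhdsWithin_le_nhds
    · filter_upwards [self_mem_nhdsWithin] with z (hz : x < z) using sub_pos.2 hz
  filter_upwards [hshift.eventually (eventually_lt_of_limsup_lt h)] with z hz
  rw [slope_def_field]
  simpa using hz

theorem eventually_le_of_diniUpper_lt_slope {f g : ℝ → ℝ} {x r : ℝ} (hfg : f x = g x)
    (hf : DiniUpper f x < r) (hg : ∀ᶠ z in 𝓝[>] x, r ≤ slope g x z) :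
    ∀ᶠ z in 𝓝[>] x, f z ≤ g z := by
  filter_upwards [eventually_slope_lt_of_diniUpper_lt hf, hg, self_mem_nhdsWithin]
    with z hfz hgz (hxz : x < z)
  have := (hfz.trans_le hgz).le
  rwa [slope_def_field, slope_def_field, div_le_div_iff_of_pos_right (sub_pos.2 hxz), hfg,
    sub_le_sub_iff_right] at this

theorem le_of_forall_touching {f g : ℝ → ℝ} {a b : ℝ} (hf : ContinuousOn f (Icc a b))
    (hg : ContinuousOn g (Icc a b)) (ha : f a ≤ g a)
    (hstep : ∀ x ∈ Ico a b, (∀ y ∈ Icc a x, f y ≤ g y) → f x = g x →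
      ∀ᶠ z in 𝓝[>] x, f z ≤ g z) :
    ∀ x ∈ Icc a b, f x ≤ g x := by
  intro x hx
  set S := {x ∈ Icc a b | ∀ y ∈ Icc a x, f y ≤ g y}
  have haS : a ∈ S := by
    refine ⟨left_mem_Icc.2 (hx.1.trans hx.2), fun y hy => ?_⟩
    rwa [le_antisymm hy.2 hy.1]
  have hSbdd : BddAbove S := ⟨b, fun y hy => hy.1.2⟩
  set c := sSup S
  have hac : a ≤ c := le_csSup hSbdd haS
  have hcb : c ≤ b := csSup_le ⟨a, haS⟩ fun y hy => hy.1.2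
  have hclosed : IsClosed {y ∈ Icc a b | f y ≤ g y} := isClosed_Icc.isClosed_le hf hg
  have hIco : Ico a c ⊆ {y ∈ Icc a b | f y ≤ g y} := by
    intro y hy
    obtain ⟨w, hwS, hyw⟩ := exists_lt_of_lt_csSup ⟨a, haS⟩ hy.2
    exact ⟨⟨hy.1, hyw.le.trans hwS.1.2⟩, hwS.2 y ⟨hy.1, hyw.le⟩⟩
  have hIcc : Icc a c ⊆ {y ∈ Icc a b | f y ≤ g y} := by
    rcases hac.eq_or_lt with hac | hac
    · intro y hy
      obtain rfl : y = a := le_antisymm (hac ▸ hy.2) hy.1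
      exact ⟨left_mem_Icc.2 (hy.2.trans hcb), ha⟩
    · rw [← closure_Ico hac.ne]
      exact hclosed.closure_subset_iff.2 hIco
  have hcb : c = b := by
    by_contra hne
    have hcb : c < b := hcb.lt_of_ne hne
    have hev : ∀ᶠ z in 𝓝[>] c, f z ≤ g z := by
      rcases (hIcc ⟨hac, le_rfl⟩).2.lt_or_eq with hlt | heq
      · filter_upwards [nhdsWithin_le_of_mem (Icc_mem_nhdsGT_of_mem ⟨hac, hcb⟩)
          ((hf c ⟨hac, hcb.le⟩).eventually_lt (hg c ⟨hac, hcb.le⟩) hlt)] with z hz using hz.le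
      · exact hstep c ⟨hac, hcb⟩ (fun y hy => (hIcc hy).2) heq
    obtain ⟨d, hcd, hd⟩ := mem_nhdsGT_iff_exists_Ioo_subset.1 hev
    set z := min ((c + d) / 2) b
    have hcz : c < z := lt_min (by linarith [mem_Ioi.1 hcd]) hcb
    have hzS : z ∈ S := by
      refine ⟨⟨hac.trans hcz.le, min_le_right _ _⟩, fun y hy => ?_⟩
      rcases le_or_gt y c with hyc | hyc
      · exact (hIcc ⟨hy.1, hyc⟩).2
      · exact hd ⟨hyc, hy.2.trans_lt ((min_le_left _ _).trans_lt (by linarith [mem_Ioi.1 hcd]))⟩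
    exact (le_csSup hSbdd hzS).not_gt hcz
  exact (hIcc ⟨hx.1, hcb ▸ hx.2⟩).2

theorem exists_monotone_slope_eq_one_of_null {N : Set ℝ} (hN : volume N = 0) {δ : ℝ}
    (hδ : 0 < δ) :
    ∃ m : ℝ → ℝ, Monotone m ∧ Continuous m ∧ (∀ v, 0 ≤ m v ∧ m v ≤ δ) ∧
      ∀ w ∈ N, ∀ᶠ z in 𝓝[>] w, slope m w z = 1 := by
  obtain ⟨U, hNU, hU, hUδ⟩ := N.exists_isOpen_lt_of_lt (ENNReal.ofReal δ)
    (hN ▸ ENNReal.ofReal_pos.2 hδ)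
  set m : ℝ → ℝ := fun v => (volume (U ∩ Iic v)).toReal
  have hfin : ∀ s ⊆ U, volume s ≠ ⊤ := fun s hs =>
    ((measure_mono hs).trans_lt (hUδ.trans ENNReal.ofReal_lt_top)).ne
  have hsplit : ∀ w z, w ≤ z → m z = m w + (volume (U ∩ Ioc w z)).toReal := by
    intro w z hwz
    rw [← ENNReal.toReal_add (hfin _ inter_subset_left) (hfin _ inter_subset_left),
      ← measure_union (disjoint_left.2 fun y hy hy' => not_lt.2 hy.2 hy'.2.1)
        (hU.measurableSet.inter measurableSet_Ioc), ← inter_union_distrib_left,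
      Iic_union_Ioc_eq_Iic hwz]
  have hinc : ∀ w z, w ≤ z → m z - m w ≤ z - w := by
    intro w z hwz
    rw [hsplit w z hwz, add_sub_cancel_left]
    refine ENNReal.toReal_le_of_le_ofReal (sub_nonneg.2 hwz) ?_
    exact (measure_mono inter_subset_right).trans_eq Real.volume_Ioc
  have hmono : Monotone m := fun w z hwz => by
    rw [hsplit w z hwz]; exact le_add_of_nonneg_right ENNReal.toReal_nonneg
  refine ⟨m, hmono, ?_, fun v => ⟨ENNReal.toReal_nonneg, ?_⟩, fun w hw => ?_⟩
  · refine (LipschitzWith.of_le_add fun w z => ?_).continuous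
    rcases le_total w z with hwz | hzw
    · exact (hmono hwz).trans (le_add_of_nonneg_right dist_nonneg)
    · linarith [hinc z w hzw, Real.dist_eq w z, le_abs_self (w - z)]
  · exact ENNReal.toReal_le_of_le_ofReal hδ.le ((measure_mono inter_subset_left).trans hUδ.le)
  · obtain ⟨l, r, ⟨hlw, hwr⟩, hlr⟩ := mem_nhds_iff_exists_Ioo_subset.1 (hU.mem_nhds (hNU hw))
    filter_upwards [Ioo_mem_nhdsGT hwr] with z hz
    have hUz : U ∩ Ioc w z = Ioc w z :=
      inter_eq_self_of_subset_right fun y hy => hlr ⟨hlw.trans hy.1, hy.2.trans_lt hz.2⟩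
    rw [slope_def_field, hsplit w z hz.1.le, hUz, Real.volume_Ioc,
      ENNReal.toReal_ofReal (sub_nonneg.2 hz.1.le), add_sub_cancel_left,
      div_self (sub_pos.2 hz.1).ne']

section Barrier

variable {B m : ℝ → ℝ} {s ε C : ℝ}

def barrier (B m : ℝ → ℝ) (s ε C v : ℝ) : ℝ := B v + ε * (v - s + 1) + C * m v

theorem barrier_le (hC : 0 < C) {v : ℝ} (hm : m v ≤ ε / C) :
    barrier B m s ε C v ≤ B v + ε * (v - s + 2) := by
  have : C * m v ≤ ε := by
    calc C * m v ≤ C * (ε / C) := mul_le_mul_of_nonneg_left hm hC.le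
      _ = ε := mul_div_cancel₀ ε hC.ne'
  rw [barrier]; linarith

theorem le_barrier (hε : 0 ≤ ε) (hC : 0 ≤ C) {v : ℝ} (hv : s ≤ v) (hm : 0 ≤ m v) :
    B v ≤ barrier B m s ε C v := by
  have := mul_nonneg hε (by linarith : 0 ≤ v - s + 1)
  have := mul_nonneg hC hm
  rw [barrier]; linarith

theorem monotoneOn_barrier {I : Set ℝ} (hB : MonotoneOn B I) (hm : Monotone m) (hε : 0 ≤ ε)
    (hC : 0 ≤ C) : MonotoneOn (barrier B m s ε C) I := fun v hv w hw hvw => by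
  have := mul_le_mul_of_nonneg_left (hm hvw) hC
  have := mul_le_mul_of_nonneg_left (by linarith : v - s + 1 ≤ w - s + 1) hε
  have := hB hv hw hvw
  simp only [barrier]; linarith

theorem continuousOn_barrier {I : Set ℝ} (hB : ContinuousOn B I) (hm : Continuous m) :
    ContinuousOn (barrier B m s ε C) I :=
  (hB.add (by fun_prop)).add (hm.continuousOn.const_smul C)

theorem eventually_le_slope_barrier {w d κ : ℝ} (hB : HasDerivAt B d w) (hε : 0 < ε)
    (hC : 0 ≤ C) (hκ : ∀ᶠ z in 𝓝[>] w, κ ≤ slope m w z) :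
    ∀ᶠ z in 𝓝[>] w, d + ε / 2 + C * κ ≤ slope (barrier B m s ε C) w z := by
  have hBslope : ∀ᶠ z in 𝓝[>] w, d - ε / 2 < slope B w z :=
    ((hasDerivAt_iff_tendsto_slope.1 hB).mono_left (nhdsGT_le_nhdsNE w)).eventually
      (lt_mem_nhds (by linarith))
  filter_upwards [hBslope, hκ, self_mem_nhdsWithin] with z hBz hκz (hwz : w < z)
  have hsum : slope (barrier B m s ε C) w z = slope B w z + ε + C * slope m w z := by
    simp only [slope_def_field, barrier]
    field_simp [(sub_pos.2 hwz).ne']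
    ring
  rw [hsum]
  nlinarith [mul_le_mul_of_nonneg_left hκz hC]

end Barrier

section Comparison

variable {f B B' : ℝ → ℝ} {s e K₀ K₁ : ℝ}

/-- The barrier is crossed neither off the exceptional set, where `D⁺ f ≤ B'` and the `ε`-term
gives room, nor on it, where the slope of `C m` beats the a priori bound `K₀ + K₁ f`. -/
theorem le_add_of_diniUpper_le_ae (hf : ContinuousOn f (Icc s e))
    (hB : ∀ u ∈ Icc s e, HasDerivAt B (B' u) u) (hB' : ∀ u ∈ Icc s e, 0 ≤ B' u)
    (hK₁ : 0 ≤ K₁) (hs : f s ≤ B s)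
    (hbound : ∀ u ∈ Ico s e, (∀ v ∈ Icc s u, f v ≤ f u) → B u ≤ f u →
      DiniUpper f u ≤ (K₀ + K₁ * f u : ℝ))
    (hae : ∀ᵐ u, u ∈ Ico s e → (∀ v ∈ Icc s u, f v ≤ f u) → B u ≤ f u →
      DiniUpper f u ≤ (B' u : ℝ))
    {ε : ℝ} (hε : 0 < ε) : ∀ u ∈ Icc s e, f u ≤ B u + ε * (u - s + 2) := by
  intro u hu
  have hBc : ContinuousOn B (Icc s e) := fun u hu => (hB u hu).continuousAt.continuousWithinAt
  have hBmono : MonotoneOn B (Icc s e) :=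
    monotoneOn_of_hasDerivWithinAt_nonneg (convex_Icc s e) hBc
      (fun u hu => (hB u (interior_subset hu)).hasDerivWithinAt)
      (fun u hu => hB' u (interior_subset hu))
  obtain ⟨M, hM⟩ := isCompact_Icc.bddAbove_image hBc
  set C := |K₀| + K₁ * (|M| + ε * (e - s + 2)) + 1
  have hC : 0 < C := by
    have := mul_nonneg hK₁ (add_nonneg (abs_nonneg M)
      (mul_nonneg hε.le (by linarith [hu.1.trans hu.2] : 0 ≤ e - s + 2)))
    linarith [abs_nonneg K₀]
  obtain ⟨m, hm_mono, hm_cont, hm_bd, hm_slope⟩ :=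
    exists_monotone_slope_eq_one_of_null (ae_iff.1 hae) (div_pos hε hC)
  set ψ := barrier B m s ε C
  have hψ_mono : MonotoneOn ψ (Icc s e) := monotoneOn_barrier hBmono hm_mono hε.le hC.le
  refine (le_of_forall_touching hf (continuousOn_barrier hBc hm_cont)
    (hs.trans (le_barrier hε.le hC.le le_rfl (hm_bd s).1)) ?_ u hu).trans
    (barrier_le hC (hm_bd u).2)
  intro w hw hpre hfw
  have hwIcc : w ∈ Icc s e := Ico_subset_Icc_self hw
  have hrun : ∀ v ∈ Icc s w, f v ≤ f w := fun v hv =>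
    (hpre v hv).trans (hfw ▸ hψ_mono ⟨hv.1, hv.2.trans hwIcc.2⟩ hwIcc hv.2)
  have hBw : B w ≤ f w := hfw ▸ le_barrier hε.le hC.le hw.1 (hm_bd w).1
  have hκ₀ : ∀ᶠ z in 𝓝[>] w, 0 ≤ slope m w z := by
    filter_upwards [self_mem_nhdsWithin] with z (hwz : w < z)
    rw [slope_def_field]
    exact div_nonneg (sub_nonneg.2 (hm_mono hwz.le)) (sub_pos.2 hwz).le
  by_cases hwN : w ∈ {u | ¬(u ∈ Ico s e → (∀ v ∈ Icc s u, f v ≤ f u) → B u ≤ f u →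
      DiniUpper f u ≤ (B' u : ℝ))}
  · refine eventually_le_of_diniUpper_lt_slope (r := C) hfw ((hbound w hw hrun hBw).trans_lt ?_)
      ((eventually_le_slope_barrier (s := s) (hB w hwIcc) hε hC.le ((hm_slope w hwN).mono
        fun z hz => hz.ge)).mono fun z hz => by linarith [hB' w hwIcc])
    have hfw_le : f w ≤ |M| + ε * (e - s + 2) := by
      have := hM (mem_image_of_mem B hwIcc)
      have := mul_le_mul_of_nonneg_left (by linarith [hwIcc.2] : w - s + 2 ≤ e - s + 2) hε.le
      linarith [le_abs_self M, hfw ▸ barrier_le hC (hm_bd w).2]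
    have := mul_le_mul_of_nonneg_left hfw_le hK₁
    exact EReal.coe_lt_coe_iff.2 (by linarith [le_abs_self K₀])
  · refine eventually_le_of_diniUpper_lt_slope hfw ((not_not.1 hwN hw hrun hBw).trans_lt
      (EReal.coe_lt_coe_iff.2 (by linarith : B' w < B' w + ε / 2)))
      ((eventually_le_slope_barrier (s := s) (hB w hwIcc) hε hC.le hκ₀).mono fun z hz => by
        linarith)

theorem le_of_diniUpper_le_ae (hf : ContinuousOn f (Icc s e))
    (hB : ∀ u ∈ Icc s e, HasDerivAt B (B' u) u) (hB' : ∀ u ∈ Icc s e, 0 ≤ B' u)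
    (hK₁ : 0 ≤ K₁) (hs : f s ≤ B s)
    (hbound : ∀ u ∈ Ico s e, (∀ v ∈ Icc s u, f v ≤ f u) → B u ≤ f u →
      DiniUpper f u ≤ (K₀ + K₁ * f u : ℝ))
    (hae : ∀ᵐ u, u ∈ Ico s e → (∀ v ∈ Icc s u, f v ≤ f u) → B u ≤ f u →
      DiniUpper f u ≤ (B' u : ℝ)) :
    ∀ u ∈ Icc s e, f u ≤ B u := by
  intro u hu
  have hpos : 0 < u - s + 2 := by linarith [hu.1]
  refine le_of_forall_pos_le_add fun ε hε => ?_
  have := le_add_of_diniUpper_le_ae hf hB hB' hK₁ hs hbound hae (div_pos hε hpos) u hu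
  rwa [div_mul_cancel₀ ε hpos.ne'] at this

end Comparison

/-- The derivative is the density of the finite Stieltjes measure of `F`; Markov's inequality. -/
theorem Monotone.volume_setOf_le_hasDerivAt_ne_top {F : ℝ → ℝ} (hF : Monotone F)
    (hFa : BddAbove (range F)) (hFb : BddBelow (range F)) {q : ℝ} (hq : 0 < q) :
    volume {u | ∀ d, HasDerivAt F d u → q ≤ d} ≠ ⊤ := by
  set G := hF.stieltjesFunction
  set ρ := G.measure.rnDeriv volume
  have hGa : BddAbove (range G) := by
    obtain ⟨M, hM⟩ := hFa
    exact ⟨M, by rintro _ ⟨x, rfl⟩; exact (hF.rightLim_le (lt_add_one x)).trans (hM ⟨_, rfl⟩)⟩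
  have hGb : BddBelow (range G) := by
    obtain ⟨M, hM⟩ := hFb
    exact ⟨M, by rintro _ ⟨x, rfl⟩; exact (hM ⟨x, rfl⟩).trans (hF.le_rightLim le_rfl)⟩
  have hGfin : G.measure univ ≠ ⊤ := by
    rw [G.measure_univ (tendsto_atBot_ciInf G.mono hGb) (tendsto_atTop_ciSup G.mono hGa)]
    exact ENNReal.ofReal_ne_top
  have hρ : volume {u | ENNReal.ofReal q ≤ ρ u} ≠ ⊤ := by
    refine (ENNReal.lt_top_of_mul_ne_top_right ?_ (ENNReal.ofReal_pos.2 hq).ne').ne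
    exact ne_top_of_le_ne_top hGfin ((mul_meas_ge_le_lintegral (Measure.measurable_rnDeriv _ _)
      _).trans (Measure.lintegral_rnDeriv_le))
  have hsub : {u | ∀ d, HasDerivAt F d u → q ≤ d} ⊆
      {u | ENNReal.ofReal q ≤ ρ u} ∪ {u | ¬HasDerivAt F (ρ u).toReal u} := by
    intro u hu
    by_cases hd : HasDerivAt F (ρ u).toReal u
    · exact Or.inl (ENNReal.ofReal_le_of_le_toReal (hu _ hd))
    · exact Or.inr hd
  refine ne_top_of_le_ne_top ?_ ((measure_mono hsub).trans (measure_union_le _ _))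
  rw [ae_iff.1 hF.ae_hasDerivAt, add_zero]
  exact hρ

theorem MonotoneOn.volume_setOf_le_hasDerivAt_ne_top {F : ℝ → ℝ} {c : ℝ}
    (hF : MonotoneOn F (Ici c)) (hFa : BddAbove (F '' Ici c)) {q : ℝ} (hq : 0 < q) :
    volume {u | c < u ∧ ∀ d, HasDerivAt F d u → q ≤ d} ≠ ⊤ := by
  set F' := fun u => F (max u c)
  have hF' : Monotone F' := fun u v huv =>
    hF (le_max_right u c) (le_max_right v c) (max_le_max huv le_rfl)
  have hF'a : BddAbove (range F') := hFa.mono (range_subset_iff.2 fun u =>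
    mem_image_of_mem F (le_max_right u c))
  have hF'b : BddBelow (range F') :=
    ⟨F c, by rintro _ ⟨u, rfl⟩; exact hF self_mem_Ici (le_max_right u c) (le_max_right u c)⟩
  refine ne_top_of_le_ne_top (hF'.volume_setOf_le_hasDerivAt_ne_top hF'a hF'b hq)
    (measure_mono fun u ⟨hcu, hu⟩ d hd => hu d (hd.congr_of_eventuallyEq ?_))
  filter_upwards [Ioi_mem_nhds hcu] with v (hv : c < v)
  simp only [F', max_eq_left hv.le]

theorem volume_inter_Ioi_eq_top {s : Set ℝ} {l : ℝ} (hsl : s ⊆ Ioi l) (hs : volume s = ⊤)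
    (c : ℝ) : volume (s ∩ Ioi c) = ⊤ := by
  have hcover : s ⊆ Ioc l c ∪ (s ∩ Ioi c) := fun t ht =>
    (le_or_gt t c).imp (fun htc => ⟨hsl ht, htc⟩) fun htc => ⟨ht, htc⟩
  have := (measure_mono (μ := volume) hcover).trans (measure_union_le _ _)
  rw [hs, Real.volume_Ioc, top_le_iff, ENNReal.add_eq_top] at this
  exact this.resolve_left ENNReal.ofReal_ne_top

noncomputable def windowSup (τ : ℝ) (V : ℝ → ℝ) (t : ℝ) : ℝ := sSup (V '' Icc (t - τ) t)

section windowSup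

variable {τ : ℝ} {V : ℝ → ℝ}

theorem le_windowSup (hV : Continuous V) {t s : ℝ} (hs : s ∈ Icc (t - τ) t) :
    V s ≤ windowSup τ V t :=
  le_csSup (isCompact_Icc.bddAbove_image hV.continuousOn) (mem_image_of_mem V hs)

theorem self_le_windowSup (hV : Continuous V) (hτ : 0 ≤ τ) (t : ℝ) : V t ≤ windowSup τ V t :=
  le_windowSup hV ⟨by linarith, le_rfl⟩

theorem windowSup_le (hτ : 0 ≤ τ) {t c : ℝ} (h : ∀ s ∈ Icc (t - τ) t, V s ≤ c) :
    windowSup τ V t ≤ c :=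
  csSup_le ((nonempty_Icc.2 (by linarith)).image V) (forall_mem_image.2 h)

theorem continuous_windowSup (hV : Continuous V) : Continuous (windowSup τ V) := by
  have : windowSup τ V = fun t => sSup ((fun s => V (t + s)) '' Icc (-τ) 0) := by
    ext t
    rw [windowSup, ← image_image V (t + ·), image_const_add_Icc, add_zero, ← sub_eq_add_neg]
  rw [this]
  exact isCompact_Icc.continuous_sSup (by fun_prop)

theorem hasDerivAt_integral_windowSup_sub (hV : Continuous V) (u : ℝ) :
    HasDerivAt (fun u => ∫ t in 0..u, (windowSup τ V t - V t)) (windowSup τ V u - V u) u :=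
  (((continuous_windowSup hV).sub hV).integral_hasStrictDerivAt 0 u).hasDerivAt

end windowSup

/-- `V` stands for `|x|`. -/
structure HalanayInequality (Ma Mb τ : ℝ) (a b V : ℝ → ℝ) : Prop where
  delay_pos : 0 < τ
  continuous : Continuous V
  nonneg : ∀ t, 0 ≤ V t
  a_nonneg : ∀ t ≥ 0, 0 ≤ a t
  a_le : ∀ t ≥ 0, a t ≤ Ma
  abs_b_le : ∀ t ≥ 0, |b t| ≤ Mb
  ae_abs_b_le_a : ∀ᵐ t, 0 ≤ t → |b t| ≤ a t
  diniUpper_le : ∀ t ≥ 0, DiniUpper V t ≤ (-(a t) * V t + b t * windowSup τ V t : ℝ)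

namespace HalanayInequality

open Real

variable {Ma Mb τ : ℝ} {a b V : ℝ → ℝ}

theorem Ma_nonneg (h : HalanayInequality Ma Mb τ a b V) : 0 ≤ Ma :=
  (h.a_nonneg 0 le_rfl).trans (h.a_le 0 le_rfl)

theorem Mb_nonneg (h : HalanayInequality Ma Mb τ a b V) : 0 ≤ Mb :=
  (abs_nonneg _).trans (h.abs_b_le 0 le_rfl)

theorem self_le_windowSup (h : HalanayInequality Ma Mb τ a b V) (t : ℝ) :
    V t ≤ windowSup τ V t :=
  _root_.self_le_windowSup h.continuous h.delay_pos.le t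

theorem windowSup_nonneg (h : HalanayInequality Ma Mb τ a b V) (t : ℝ) :
    0 ≤ windowSup τ V t :=
  (h.nonneg t).trans (h.self_le_windowSup t)

theorem diniUpper_le_of_le_sub_abs (h : HalanayInequality Ma Mb τ a b V) {t η : ℝ}
    (ht : 0 ≤ t) (hη : 0 ≤ η) (hηt : η ≤ a t - |b t|) :
    DiniUpper V t ≤ (-η * V t + Ma * (windowSup τ V t - V t) : ℝ) := by
  refine (h.diniUpper_le t ht).trans (EReal.coe_le_coe_iff.2 ?_)
  have h₁ := mul_le_mul_of_nonneg_right (le_abs_self (b t)) (h.windowSup_nonneg t)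
  have h₂ := mul_le_mul_of_nonneg_right hηt (h.nonneg t)
  have h₃ := mul_le_mul_of_nonneg_right (by linarith [h.a_le t ht] : |b t| ≤ Ma)
    (sub_nonneg.2 (h.self_le_windowSup t))
  linarith

theorem diniUpper_le_of_abs_le (h : HalanayInequality Ma Mb τ a b V) {t : ℝ} (ht : 0 ≤ t)
    (hab : |b t| ≤ a t) : DiniUpper V t ≤ (Ma * (windowSup τ V t - V t) : ℝ) := by
  simpa using h.diniUpper_le_of_le_sub_abs ht le_rfl (sub_nonneg.2 hab)

theorem diniUpper_le_mul_windowSup (h : HalanayInequality Ma Mb τ a b V) {t : ℝ} (ht : 0 ≤ t) :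
    DiniUpper V t ≤ (Mb * windowSup τ V t : ℝ) := by
  refine (h.diniUpper_le t ht).trans (EReal.coe_le_coe_iff.2 ?_)
  have h₁ := mul_nonneg (h.a_nonneg t ht) (h.nonneg t)
  have h₂ := mul_le_mul_of_nonneg_right ((le_abs_self (b t)).trans (h.abs_b_le t ht))
    (h.windowSup_nonneg t)
  linarith

theorem le_windowSup_of_le (h : HalanayInequality Ma Mb τ a b V) {t u : ℝ} (ht : 0 ≤ t)
    (htu : t ≤ u) : V u ≤ windowSup τ V t := by
  have hmax : ∀ v ∈ Ico t u, (∀ w ∈ Icc t v, V w ≤ V v) → windowSup τ V t ≤ V v →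
      windowSup τ V v ≤ V v := fun v hv hrun hPv =>
    windowSup_le h.delay_pos.le fun ξ hξ => by
      rcases le_total ξ t with hξt | hξt
      · exact (le_windowSup h.continuous ⟨by linarith [hξ.1, hv.1], hξt⟩).trans hPv
      · exact hrun ξ ⟨hξt, hξ.2⟩
  refine le_of_diniUpper_le_ae (B := fun _ => windowSup τ V t) (B' := fun _ => 0) (K₀ := 0)
    (K₁ := Mb) h.continuous.continuousOn (fun v _ => hasDerivAt_const v _) (fun _ _ => le_rfl)
    h.Mb_nonneg (h.self_le_windowSup t) ?_ ?_ u ⟨htu, le_rfl⟩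
  · intro v hv hrun hPv
    refine (h.diniUpper_le_mul_windowSup (ht.trans hv.1)).trans (EReal.coe_le_coe_iff.2 ?_)
    simpa using mul_le_mul_of_nonneg_left (hmax v hv hrun hPv) h.Mb_nonneg
  · filter_upwards [h.ae_abs_b_le_a] with v hab hv hrun hPv
    refine (h.diniUpper_le_of_abs_le (ht.trans hv.1) (hab (ht.trans hv.1))).trans
      (EReal.coe_le_coe_iff.2 ?_)
    exact mul_nonpos_of_nonneg_of_nonpos h.Ma_nonneg (sub_nonpos.2 (hmax v hv hrun hPv))

theorem windowSup_antitoneOn (h : HalanayInequality Ma Mb τ a b V) :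
    AntitoneOn (windowSup τ V) (Ici 0) := fun t ht _ _ htu =>
  windowSup_le h.delay_pos.le fun ξ hξ => by
    rcases le_total ξ t with hξt | hξt
    · exact le_windowSup h.continuous ⟨by linarith [hξ.1], hξt⟩
    · exact h.le_windowSup_of_le ht hξt

theorem diniUpper_le_mul_windowSup_of_le (h : HalanayInequality Ma Mb τ a b V) {s v : ℝ}
    (hs : 0 ≤ s) (hsv : s ≤ v) : DiniUpper V v ≤ (Mb * windowSup τ V s : ℝ) :=
  (h.diniUpper_le_mul_windowSup (hs.trans hsv)).trans (EReal.coe_le_coe_iff.2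
    (mul_le_mul_of_nonneg_left (h.windowSup_antitoneOn hs (hs.trans hsv) hsv) h.Mb_nonneg))

theorem le_sub_mul_exp_of_windowSup_le (h : HalanayInequality Ma Mb τ a b V) {s u Ω : ℝ}
    (hs : 0 ≤ s) (hsu : s ≤ u) (hΩ : windowSup τ V s ≤ Ω) :
    V u ≤ Ω - (Ω - V s) * exp (-(Ma * (u - s))) := by
  have hΩs : 0 ≤ Ω - V s := by linarith [h.self_le_windowSup s]
  have hB : ∀ v, HasDerivAt (fun v => Ω - (Ω - V s) * exp (-(Ma * (v - s))))
      (Ma * ((Ω - V s) * exp (-(Ma * (v - s))))) v := fun v => by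
    have hlin : HasDerivAt (fun v => -(Ma * (v - s))) (-(Ma * 1)) v :=
      (((hasDerivAt_id' v).sub_const s).const_mul Ma).neg
    exact ((hlin.exp.const_mul (Ω - V s)).const_sub Ω).congr_deriv (by ring)
  refine le_of_diniUpper_le_ae (K₀ := Mb * windowSup τ V s) (K₁ := 0)
    h.continuous.continuousOn (fun v _ => hB v)
    (fun v _ => mul_nonneg h.Ma_nonneg (mul_nonneg hΩs (exp_pos _).le)) le_rfl (by simp) ?_ ?_
    u ⟨hsu, le_rfl⟩
  · intro v hv _ _
    simpa using h.diniUpper_le_mul_windowSup_of_le hs hv.1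
  · filter_upwards [h.ae_abs_b_le_a] with v hab hv _ hBv
    have hv0 := hs.trans hv.1
    refine (h.diniUpper_le_of_abs_le hv0 (hab hv0)).trans (EReal.coe_le_coe_iff.2 ?_)
    have hPv := (h.windowSup_antitoneOn hs hv0 hv.1).trans hΩ
    exact mul_le_mul_of_nonneg_left (by linarith) h.Ma_nonneg

/-- By `le_sub_mul_exp_of_windowSup_le` started at `u`, the whole window `[t + τ, t + 2τ]` stays
below `windowSup τ V t - (windowSup τ V t - V u) e^{-2 Ma τ}`. -/
theorem windowSup_sub_le (h : HalanayInequality Ma Mb τ a b V) {t u : ℝ} (ht : 0 ≤ t)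
    (hu : u ∈ Icc t (t + τ)) :
    windowSup τ V t - V u ≤
      (windowSup τ V t - windowSup τ V (t + 2 * τ)) * exp (2 * Ma * τ) := by
  have hu0 : 0 ≤ u := ht.trans hu.1
  have hPu : windowSup τ V u ≤ windowSup τ V t := h.windowSup_antitoneOn ht hu0 hu.1
  have hgap : 0 ≤ windowSup τ V t - V u := by linarith [h.self_le_windowSup u]
  have hdrop : windowSup τ V (t + 2 * τ) ≤
      windowSup τ V t - (windowSup τ V t - V u) * exp (-(2 * Ma * τ)) :=
    windowSup_le h.delay_pos.le fun ξ hξ => by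
      have hexp : exp (-(2 * Ma * τ)) ≤ exp (-(Ma * (ξ - u))) :=
        exp_le_exp.2 (neg_le_neg (by nlinarith [h.Ma_nonneg, hξ.2, hu.1]))
      have := h.le_sub_mul_exp_of_windowSup_le (u := ξ) hu0 (by linarith [hξ.1, hu.2]) hPu
      nlinarith [mul_le_mul_of_nonneg_left hexp hgap]
  calc windowSup τ V t - V u
      = (windowSup τ V t - V u) * exp (-(2 * Ma * τ)) * exp (2 * Ma * τ) := by
        rw [mul_assoc, ← exp_add, neg_add_cancel, exp_zero, mul_one]
    _ ≤ _ := mul_le_mul_of_nonneg_right (by linarith) (exp_pos _).le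

theorem integral_windowSup_sub_le_block (h : HalanayInequality Ma Mb τ a b V) {t : ℝ}
    (ht : 0 ≤ t) :
    ∫ s in t..t + τ, (windowSup τ V s - V s) ≤
      τ * exp (2 * Ma * τ) * (windowSup τ V t - windowSup τ V (t + 2 * τ)) := by
  have hbound := intervalIntegral.integral_mono_on (μ := volume)
    (by linarith [h.delay_pos] : t ≤ t + τ)
    (((continuous_windowSup h.continuous).sub h.continuous).intervalIntegrable _ _)
    intervalIntegrable_const fun s hs =>
      (sub_le_sub_right (h.windowSup_antitoneOn ht (ht.trans hs.1) hs.1) (V s)).trans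
        (h.windowSup_sub_le ht hs)
  rw [intervalIntegral.integral_const, smul_eq_mul, add_sub_cancel_left] at hbound
  exact hbound.trans_eq (by ring)

/-- Summing `integral_windowSup_sub_le_block` over the blocks `[kτ, (k+1)τ]` telescopes. -/
theorem integral_windowSup_sub_le (h : HalanayInequality Ma Mb τ a b V) {u : ℝ} (hu : 0 ≤ u) :
    ∫ t in 0..u, (windowSup τ V t - V t) ≤ 2 * τ * exp (2 * Ma * τ) * windowSup τ V 0 := by
  set P := windowSup τ V
  set c := τ * exp (2 * Ma * τ)
  have hg : Continuous fun t => P t - V t := (continuous_windowSup h.continuous).sub h.continuous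
  set t : ℕ → ℝ := fun k => k * τ
  set g : ℕ → ℝ := fun k => P (t k) + P (t (k + 1))
  have ht : ∀ k, 0 ≤ t k := fun k => mul_nonneg k.cast_nonneg h.delay_pos.le
  have hstep : ∀ k, t (k + 1) = t k + τ := fun k => by simp only [t]; push_cast; ring
  have hblock : ∀ k, ∫ s in t k..t (k + 1), (P s - V s) ≤ c * (g k - g (k + 1)) := fun k => by
    have : t (k + 1 + 1) = t k + 2 * τ := by rw [hstep, hstep]; ring
    simp only [g, this, hstep k]
    linarith [h.integral_windowSup_sub_le_block (ht k)]
  obtain ⟨n, hn⟩ := exists_nat_ge (u / τ)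
  calc ∫ s in 0..u, (P s - V s)
      ≤ ∫ s in t 0..t n, (P s - V s) := by
        simp only [t, CharP.cast_eq_zero, zero_mul]
        exact intervalIntegral.integral_mono_interval le_rfl hu ((div_le_iff₀ h.delay_pos).1 hn)
          (Eventually.of_forall fun s => sub_nonneg.2 (h.self_le_windowSup s))
          (hg.intervalIntegrable _ _)
    _ = ∑ k ∈ Finset.range n, ∫ s in t k..t (k + 1), (P s - V s) :=
        (intervalIntegral.sum_integral_adjacent_intervals fun k _ => hg.intervalIntegrable _ _).symm
    _ ≤ ∑ k ∈ Finset.range n, c * (g k - g (k + 1)) := Finset.sum_le_sum fun k _ => hblock k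
    _ = c * (g 0 - g n) := by rw [← Finset.mul_sum, Finset.sum_range_sub']
    _ ≤ c * (2 * P 0) := by
        refine mul_le_mul_of_nonneg_left ?_ (mul_nonneg h.delay_pos.le (exp_pos _).le)
        have h₁ : P (t 1) ≤ P 0 := by
          simpa [t] using h.windowSup_antitoneOn self_mem_Ici (ht 1) (ht 1)
        have h₂ : 0 ≤ g n := add_nonneg (h.windowSup_nonneg _) (h.windowSup_nonneg _)
        simp only [g, t, CharP.cast_eq_zero, zero_mul, zero_add] at h₁ h₂ ⊢
        linarith
    _ = 2 * τ * exp (2 * Ma * τ) * P 0 := by ring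

theorem monotoneOn_integral_sub (h : HalanayInequality Ma Mb τ a b V) :
    MonotoneOn (fun u => Ma * (∫ t in 0..u, (windowSup τ V t - V t)) - V u) (Ici 0) := by
  intro s hs u _ hsu
  set A := fun u => ∫ t in 0..u, (windowSup τ V t - V t)
  have hA : ∀ v, HasDerivAt A (windowSup τ V v - V v) v :=
    hasDerivAt_integral_windowSup_sub h.continuous
  have := le_of_diniUpper_le_ae (B := fun v => V s + Ma * (A v - A s))
    (B' := fun v => Ma * (windowSup τ V v - V v)) (K₀ := Mb * windowSup τ V s) (K₁ := 0)
    h.continuous.continuousOn (fun v _ => (((hA v).sub_const (A s)).const_mul Ma).const_add (V s))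
    (fun v _ => mul_nonneg h.Ma_nonneg (sub_nonneg.2 (h.self_le_windowSup v))) le_rfl (by simp)
    (fun v hv _ _ => by simpa using h.diniUpper_le_mul_windowSup_of_le hs hv.1)
    (by filter_upwards [h.ae_abs_b_le_a] with v hab hv _ _ using
      h.diniUpper_le_of_abs_le (hs.trans hv.1) (hab (hs.trans hv.1)))
    u ⟨hsu, le_rfl⟩
  simp only [A] at this ⊢
  linarith

theorem exists_tendsto (h : HalanayInequality Ma Mb τ a b V) : ∃ L, Tendsto V atTop (𝓝 L) := by
  set P := windowSup τ V
  have hQ : Antitone fun t => P (max t 0) := fun s t hst =>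
    h.windowSup_antitoneOn (le_max_right s 0) (le_max_right t 0) (max_le_max hst le_rfl)
  have hP : Tendsto P atTop (𝓝 (⨅ t, P (max t 0))) := by
    refine (tendsto_atTop_ciInf hQ ⟨0, ?_⟩).congr' ?_
    · rintro _ ⟨t, rfl⟩; exact h.windowSup_nonneg _
    · filter_upwards [eventually_ge_atTop 0] with t ht
      simp only [max_eq_left ht]
  have hgap : Tendsto (fun t => (P t - P (t + 2 * τ)) * exp (2 * Ma * τ)) atTop (𝓝 0) := by
    simpa using (hP.sub (hP.comp (tendsto_atTop_add_const_right _ _ tendsto_id))).mul_const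
      (exp (2 * Ma * τ))
  have hPV : Tendsto (fun t => P t - V t) atTop (𝓝 0) :=
    tendsto_of_tendsto_of_tendsto_of_le_of_le' tendsto_const_nhds hgap
      (Eventually.of_forall fun t => sub_nonneg.2 (h.self_le_windowSup t))
      (by filter_upwards [eventually_ge_atTop 0] with t ht using
        h.windowSup_sub_le ht ⟨le_rfl, by linarith [h.delay_pos]⟩)
  exact ⟨_, by simpa using hP.sub hPV⟩

theorem mul_le_of_hasDerivAt (h : HalanayInequality Ma Mb τ a b V) {u η d : ℝ} (hu : 0 ≤ u)
    (hη : 0 ≤ η) (hηu : η ≤ a u - |b u|)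
    (hd : HasDerivAt (fun u => Ma * (∫ t in 0..u, (windowSup τ V t - V t)) - V u) d u) :
    η * V u ≤ d := by
  have hA := (hasDerivAt_integral_windowSup_sub (τ := τ) h.continuous u).const_mul Ma
  have hV : HasDerivAt V (Ma * (windowSup τ V u - V u) - d) u :=
    (hA.sub hd).congr_of_eventuallyEq (Eventually.of_forall fun y => by simp)
  have := hV.diniUpper_eq ▸ h.diniUpper_le_of_le_sub_abs hu hη hηu
  linarith [EReal.coe_le_coe_iff.1 this]

theorem tendsto_zero (h : HalanayInequality Ma Mb τ a b V) {η : ℝ} (hη : 0 < η)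
    (hS : volume {t ∈ Ioi (0 : ℝ) | a t - |b t| > η} = ⊤) : Tendsto V atTop (𝓝 0) := by
  obtain ⟨L, hL⟩ := h.exists_tendsto
  obtain rfl | hLpos := (ge_of_tendsto' hL h.nonneg).eq_or_lt
  · exact hL
  exfalso
  obtain ⟨T, hT⟩ := eventually_atTop.1 (hL.eventually (eventually_ge_nhds (half_lt_self hLpos)))
  set T' := max T 0
  have hG := h.monotoneOn_integral_sub.mono (Ici_subset_Ici.2 (le_max_right T 0))
  refine hG.volume_setOf_le_hasDerivAt_ne_top (q := η * (L / 2)) ?_ (by positivity) (top_unique ?_)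
  · refine ⟨Ma * (2 * τ * exp (2 * Ma * τ) * windowSup τ V 0), forall_mem_image.2 fun u hu => ?_⟩
    have := mul_le_mul_of_nonneg_left
      (h.integral_windowSup_sub_le ((le_max_right T 0).trans hu)) h.Ma_nonneg
    linarith [h.nonneg u]
  rw [← volume_inter_Ioi_eq_top (fun t ht => ht.1) hS T']
  refine measure_mono fun u ⟨⟨hu0, hηu⟩, hTu⟩ => ⟨hTu, fun d hd => ?_⟩
  exact (mul_le_mul_of_nonneg_left (hT u ((le_max_left T 0).trans hTu.le)) hη.le).trans
    (h.mul_le_of_hasDerivAt (le_of_lt hu0) hη.le hηu.le hd)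

end HalanayInequality

theorem generalized_halanay_corollary_general (Ma Mb τmax : ℝ) (a b : ℝ → ℝ)
    (hτmax : 0 < τmax)
    (ha : ∀ t ≥ (0 : ℝ), 0 < a t ∧ a t ≤ Ma)
    (hb : ∀ t ≥ (0 : ℝ), |b t| ≤ Mb)
    (hminus : MeasureTheory.volume {t ∈ Set.Ioi (0 : ℝ) | a t < |b t|} = 0)
    (heta : ∃ η > (0 : ℝ), MeasureTheory.volume {t ∈ Set.Ioi (0 : ℝ) | a t - |b t| > η} = ⊤)
    (x : ℝ → ℝ) (hxcont : Continuous x)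
    (hineq : ∀ t ≥ (0 : ℝ), DiniUpper (fun s => |x s|) t ≤
      ((-(a t) * |x t| + b t * sSup ((fun s => |x s|) '' Set.Icc (t - τmax) t) : ℝ) : EReal)) :
    Filter.Tendsto x Filter.atTop (nhds 0) := by
  obtain ⟨η, hη, hS⟩ := heta
  have hae : ∀ᵐ t, 0 ≤ t → |b t| ≤ a t := by
    refine ae_iff.2 (measure_mono_null (fun t ht => ?_)
      (measure_union_null hminus (Real.volume_singleton (a := 0))))
    obtain ⟨ht0, hlt⟩ : 0 ≤ t ∧ a t < |b t| := by simpa using ht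
    rcases ht0.eq_or_lt with h0 | h0
    · exact Or.inr h0.symm
    · exact Or.inl ⟨h0, hlt⟩
  have h : HalanayInequality Ma Mb τmax a b (fun s => |x s|) :=
    ⟨hτmax, hxcont.abs, fun t => abs_nonneg _, fun t ht => (ha t ht).1.le, fun t ht => (ha t ht).2,
      hb, hae, hineq⟩
  exact (tendsto_zero_iff_abs_tendsto_zero x).2 (h.tendsto_zero hη hS)

/-- **Corollary of the generalized Halanay inequality.** If `μ_-(0,∞) = 0` (the set where
`a(t) < |b(t)|` is null) and there is `η > 0` such that `μ_η(0,∞) = ∞` (the set where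
`a(t) - |b(t)| > η` has infinite Lebesgue measure), then every solution of
`D⁺|x(t)| ≤ -a(t)|x(t)| + b(t) sup_{t-τ_max ≤ s ≤ t} |x(s)|` tends to zero. -/
theorem generalized_halanay_corollary (Ma Mb τmax : ℝ) (a b : ℝ → ℝ)
    (hτmax : 0 < τmax)
    (ha : ∀ t ≥ (0 : ℝ), 0 < a t ∧ a t ≤ Ma)
    (hb : ∀ t ≥ (0 : ℝ), |b t| ≤ Mb)
    (hminus : MeasureTheory.volume {t ∈ Set.Ioi (0 : ℝ) | a t < |b t|} = 0)
    (heta : ∃ η > (0 : ℝ), MeasureTheory.volume {t ∈ Set.Ioi (0 : ℝ) | a t - |b t| > η} = ⊤)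
    (x φ : ℝ → ℝ) (hxcont : Continuous x)
    (hinit : ∀ s ∈ Set.Icc (-τmax) (0 : ℝ), x s = φ s)
    (hineq : ∀ t ≥ (0 : ℝ), DiniUpper (fun s => |x s|) t ≤
      ((-(a t) * |x t| + b t * sSup ((fun s => |x s|) '' Set.Icc (t - τmax) t) : ℝ) : EReal)) :
    Filter.Tendsto x Filter.atTop (nhds 0) :=
  generalized_halanay_corollary_general Ma Mb τmax a b hτmax ha hb hminus heta x hxcont hineq
end

section
/- Let M₀(t) = sup_{t−τ_max ≤ s ≤ t} |x(s)| for a solution x of the delay inequality. Then M₀(t) is nonincreasing on the set S_+(0, +∞) as well as on the set S_η(0, +∞) for any given η > 0; that is, at every t₁ with a(t₁) ≥ |b(t₁)| the function M₀ is nonincreasing at t₁. -/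
/-- The maximal function `M₀(t) = sup_{t-τ_max ≤ s ≤ t} |x(s)|`. -/
noncomputable def M0 (x : ℝ → ℝ) (τmax t : ℝ) : ℝ :=
  sSup ((fun s => |x s|) '' Set.Icc (t - τmax) t)

/-- **Lemma 1.** The maximal function `M₀(t) = sup_{t-τ_max ≤ s ≤ t} |x(s)|` of a solution
of `D⁺|x(t)| ≤ -a(t)|x(t)| + b(t) sup_{t-τ_max ≤ s ≤ t} |x(s)|` is nonincreasing on
`S_+(0,∞)` and on `S_η(0,∞)` for any `η > 0`: at every `t₁ ≥ 0` with `a(t₁) ≥ |b(t₁)|`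
the function `M₀` is nonincreasing at `t₁` (its upper right Dini derivative is `≤ 0`). -/
theorem M0_nonincreasing (Ma Mb τmax : ℝ) (a b : ℝ → ℝ)
    (hτmax : 0 < τmax)
    (ha : ∀ t ≥ (0 : ℝ), 0 < a t ∧ a t ≤ Ma)
    (hb : ∀ t ≥ (0 : ℝ), |b t| ≤ Mb)
    (x φ : ℝ → ℝ) (hxcont : Continuous x)
    (hinit : ∀ s ∈ Set.Icc (-τmax) (0 : ℝ), x s = φ s)
    (hineq : ∀ t ≥ (0 : ℝ), DiniUpper (fun s => |x s|) t ≤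
      ((-(a t) * |x t| + b t * sSup ((fun s => |x s|) '' Set.Icc (t - τmax) t) : ℝ) : EReal)) :
    ∀ t₁ ≥ (0 : ℝ), |b t₁| ≤ a t₁ → DiniUpper (M0 x τmax) t₁ ≤ 0 := by
  intro t₁ ht₁ hba
  have hycont : Continuous fun s => |x s| := hxcont.abs
  have hbdd : ∀ t : ℝ, BddAbove ((fun s => |x s|) '' Set.Icc (t - τmax) t) :=
    fun t => (isCompact_Icc.image hycont).bddAbove
  have hle : ∀ t : ℝ, ∀ s ∈ Set.Icc (t - τmax) t, |x s| ≤ M0 x τmax t :=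
    fun t s hs => le_csSup (hbdd t) ⟨s, hs, rfl⟩
  have ht₁mem : t₁ ∈ Set.Icc (t₁ - τmax) t₁ := ⟨by linarith, le_refl _⟩
  have hyle : |x t₁| ≤ M0 x τmax t₁ := hle t₁ t₁ ht₁mem
  have hM0nonneg : 0 ≤ M0 x τmax t₁ := le_trans (abs_nonneg _) hyle
  have key : ∀ ε : ℝ, 0 < ε → DiniUpper (M0 x τmax) t₁ ≤ (ε : EReal) := by
    intro ε hε
    have hδ : ∃ δ > 0, ∀ s : ℝ, t₁ < s → s - t₁ < δ →
        |x s| ≤ M0 x τmax t₁ + ε * (s - t₁) := by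
      rcases lt_or_eq_of_le hyle with hlt | heq
      · -- strict case: use continuity
        have hev : ∀ᶠ s in nhds t₁, |x s| < M0 x τmax t₁ :=
          (hycont.continuousAt (x := t₁)).eventually_lt continuousAt_const hlt
        rw [Metric.eventually_nhds_iff] at hev
        obtain ⟨δ, hδpos, hδ⟩ := hev
        refine ⟨δ, hδpos, fun s hs1 hs2 => ?_⟩
        have : dist s t₁ < δ := by
          rw [Real.dist_eq, abs_of_pos (by linarith)]; exact hs2
        have := hδ this
        nlinarith
      · -- equality case: use the Dini inequality at t₁
        have hba' : b t₁ ≤ a t₁ := le_trans (le_abs_self _) hba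
        have hC : (-(a t₁) * |x t₁| + b t₁ *
            sSup ((fun s => |x s|) '' Set.Icc (t₁ - τmax) t₁) : ℝ) ≤ 0 := by
          have h1 : sSup ((fun s => |x s|) '' Set.Icc (t₁ - τmax) t₁) = M0 x τmax t₁ := rfl
          rw [h1, heq]
          nlinarith [mul_nonneg (sub_nonneg.mpr hba') hM0nonneg]
        have hD : DiniUpper (fun s => |x s|) t₁ < (ε : EReal) := by
          refine lt_of_le_of_lt (hineq t₁ ht₁) ?_
          exact_mod_cast lt_of_le_of_lt hC hε
        unfold DiniUpper at hD
        have hev := Filter.eventually_lt_of_limsup_lt hD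
        rw [eventually_nhdsWithin_iff, Metric.eventually_nhds_iff] at hev
        obtain ⟨δ, hδpos, hδ⟩ := hev
        refine ⟨δ, hδpos, fun s hs1 hs2 => ?_⟩
        have hd : dist (s - t₁) 0 < δ := by
          rw [Real.dist_eq, sub_zero, abs_of_pos (by linarith)]; exact hs2
        have hmem : s - t₁ ∈ Set.Ioi (0 : ℝ) := by simp; linarith
        have := hδ hd hmem
        rw [EReal.coe_lt_coe_iff] at this
        have hq : (|x (t₁ + (s - t₁))| - |x t₁|) / (s - t₁) < ε := this
        rw [show t₁ + (s - t₁) = s by ring] at hq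
        rw [div_lt_iff₀ (by linarith)] at hq
        rw [← heq]
        linarith
    obtain ⟨δ, hδpos, hδ⟩ := hδ
    have hev : ∀ᶠ h in nhdsWithin (0 : ℝ) (Set.Ioi 0),
        (((M0 x τmax (t₁ + h) - M0 x τmax t₁) / h : ℝ) : EReal) ≤ (ε : EReal) := by
      rw [eventually_nhdsWithin_iff, Metric.eventually_nhds_iff]
      refine ⟨δ, hδpos, fun h hdist hh => ?_⟩
      have hh0 : (0 : ℝ) < h := hh
      have hhδ : h < δ := by
        rw [Real.dist_eq, sub_zero, abs_of_pos hh0] at hdist; exact hdist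
      have hM : M0 x τmax (t₁ + h) ≤ M0 x τmax t₁ + ε * h := by
        apply Real.sSup_le ?_ (by nlinarith)
        rintro v ⟨s, hs, rfl⟩
        rcases le_or_gt s t₁ with hst | hst
        · have : |x s| ≤ M0 x τmax t₁ := hle t₁ s ⟨by linarith [hs.1], hst⟩
          nlinarith
        · have h1 : s - t₁ < δ := by linarith [hs.2]
          have h2 := hδ s hst h1
          nlinarith [hs.2]
      rw [EReal.coe_le_coe_iff, div_le_iff₀ hh0]
      linarith
    exact Filter.limsup_le_of_le (by isBoundedDefault) hev
  by_contra hcon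
  push_neg at hcon
  obtain ⟨z, hz0, hzD⟩ := EReal.exists_between_coe_real hcon
  have hz0' : (0 : ℝ) < z := by exact_mod_cast hz0
  exact absurd (key z hz0') (not_le.mpr hzD)
end

section
/- Let M₀(t) = sup_{t−τ_max ≤ s ≤ t} |x(s)| for a solution x of the delay inequality. Then for any 0 ≤ t₁ < t₂, M₀(t₂) ≤ M₀(t₁) e^{M_b μ_−(t₁, t₂)}, where μ_−(t₁,t₂) is the Lebesgue measure of {t ∈ (t₁,t₂) : a(t) < |b(t)|}. -/
open Set Filter MeasureTheory

/-- `μ_-(t₁,t₂)`, the Lebesgue measure of `{t ∈ (t₁,t₂) : a(t) < |b(t)|}`. -/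
noncomputable def muMinus (a b : ℝ → ℝ) (t₁ t₂ : ℝ) : ℝ :=
  (MeasureTheory.volume {t ∈ Set.Ioo t₁ t₂ | a t < |b t|}).toReal

/-- Generic right-Dini comparison lemma. -/
lemma dini_comparison {f B : ℝ → ℝ} {a b : ℝ}
    (hf : ContinuousOn f (Icc a b)) (hB : ContinuousOn B (Icc a b))
    (hstart : f a < B a)
    (H : ∀ t ∈ Ico a b, f t = B t → ∃ᶠ z in nhdsWithin t (Ioi t), f z < B z) :
    ∀ t ∈ Icc a b, f t ≤ B t := by
  by_contra hcon
  push_neg at hcon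
  obtain ⟨c, hc, hfc⟩ := hcon
  set E : Set ℝ := {t ∈ Icc a c | f t ≤ B t} with hE
  have haE : a ∈ E := ⟨⟨le_refl a, hc.1⟩, hstart.le⟩
  have hEne : E.Nonempty := ⟨a, haE⟩
  have hEbdd : BddAbove E := ⟨c, fun t ht => ht.1.2⟩
  have hEclosed : IsClosed E := by
    have hsub : Icc a c ⊆ Icc a b := Icc_subset_Icc le_rfl hc.2
    have : E = Icc a c ∩ {t | (f - B) t ≤ 0} := by
      ext t; simp [hE, sub_nonpos, Set.mem_setOf_eq, Pi.sub_apply]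
    rw [this]
    exact ContinuousOn.preimage_isClosed_of_isClosed
      ((hf.sub hB).mono hsub) isClosed_Icc isClosed_Iic
  set T := sSup E with hT
  have hTE : T ∈ E := hEclosed.csSup_mem hEne hEbdd
  have hTc : T ≤ c := csSup_le hEne fun t ht => ht.1.2
  have hTa : a ≤ T := le_csSup hEbdd haE
  have hTltc : T < c := by
    rcases lt_or_eq_of_le hTc with h | h
    · exact h
    · exfalso; rw [h] at hTE; exact absurd hTE.2 (not_le.mpr hfc)
  have hTb : T ∈ Ico a b := ⟨hTa, lt_of_lt_of_le hTltc hc.2⟩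
  have hfreq : ∃ᶠ z in nhdsWithin T (Ioi T), f z < B z := by
    rcases lt_or_eq_of_le hTE.2 with h | h
    · have hTab : T ∈ Icc a b := ⟨hTa, hTb.2.le⟩
      have hcont : ContinuousWithinAt (fun t => f t - B t) (Icc a b) T :=
        (hf.sub hB) T hTab
      have h2 : ContinuousWithinAt (fun t => f t - B t) (Ioi T) T := by
        apply hcont.mono_of_mem_nhdsWithin
        have : Ioc T b ∈ nhdsWithin T (Ioi T) := Ioc_mem_nhdsGT_of_mem ⟨le_refl T, hTb.2⟩
        exact mem_of_superset this (fun z hz => ⟨hTa.trans hz.1.le, hz.2⟩)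
      have hev : ∀ᶠ z in nhdsWithin T (Ioi T), f z - B z < 0 :=
        Filter.Tendsto.eventually_lt_const (by linarith [h] : f T - B T < 0) h2
      exact (hev.mono fun z hz => by linarith).frequently
    · exact H T hTb h
  have hmem : Ioo T c ∈ nhdsWithin T (Ioi T) := Ioo_mem_nhdsGT_of_mem ⟨le_refl T, hTltc⟩
  obtain ⟨z, hz1, hz2⟩ := (hfreq.and_eventually (eventually_of_mem hmem fun z hz => hz)).exists
  have hzE : z ∈ E := ⟨⟨hTa.trans hz2.1.le, hz2.2.le⟩, hz1.le⟩
  exact absurd (le_csSup hEbdd hzE) (not_le.mpr hz2.1)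

lemma M0_bddAbove (x : ℝ → ℝ) (hx : Continuous x) (τmax t : ℝ) :
    BddAbove ((fun s => |x s|) '' Icc (t - τmax) t) :=
  (isCompact_Icc.image hx.abs).bddAbove

lemma abs_le_M0 (x : ℝ → ℝ) (hx : Continuous x) {τmax : ℝ} (hτ : 0 < τmax) (t : ℝ) :
    |x t| ≤ M0 x τmax t :=
  le_csSup (M0_bddAbove x hx τmax t) ⟨t, ⟨by linarith, le_refl t⟩, rfl⟩

lemma M0_nonneg (x : ℝ → ℝ) (hx : Continuous x) {τmax : ℝ} (hτ : 0 < τmax) (t : ℝ) :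
    0 ≤ M0 x τmax t := (abs_nonneg _).trans (abs_le_M0 x hx hτ t)

/-- window split estimate -/
lemma M0_le_max (x : ℝ → ℝ) (hx : Continuous x) {τmax : ℝ} (hτ : 0 < τmax)
    {t z : ℝ} (htz : t ≤ z) :
    M0 x τmax z ≤ max (M0 x τmax t) (sSup ((fun s => |x s|) '' Icc t z)) := by
  apply Real.sSup_le
  · rintro y ⟨s, hs, rfl⟩
    rcases le_or_gt s t with h | h
    · exact le_max_of_le_left (le_csSup (M0_bddAbove x hx τmax t) ⟨s, ⟨by linarith [hs.1], h⟩, rfl⟩)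
    · exact le_max_of_le_right (le_csSup ((isCompact_Icc.image hx.abs).bddAbove) ⟨s, ⟨h.le, hs.2⟩, rfl⟩)
  · exact le_max_of_le_left (M0_nonneg x hx hτ t)

/-- If `|x|` is bounded by `c` on `[t,z]` then the inner sup is too. -/
lemma innerSup_le (x : ℝ → ℝ) {t z c : ℝ} (htz : t ≤ z) (h0 : 0 ≤ c)
    (h : ∀ s ∈ Icc t z, |x s| ≤ c) :
    sSup ((fun s => |x s|) '' Icc t z) ≤ c := by
  apply Real.sSup_le
  · rintro y ⟨s, hs, rfl⟩; exact h s hs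
  · exact h0

/-- Continuity of the maximal function. -/
lemma M0_continuous (x : ℝ → ℝ) (hx : Continuous x) {τmax : ℝ} (hτ : 0 < τmax) :
    Continuous (M0 x τmax) := by
  rw [Metric.continuous_iff]
  intro t ε hε
  set C : Set ℝ := Icc (t - τmax - 1) (t + 1) with hC
  have hUC : UniformContinuousOn x C := isCompact_Icc.uniformContinuousOn_of_continuous
    hx.continuousOn
  rw [Metric.uniformContinuousOn_iff] at hUC
  obtain ⟨δ, hδ, hkey⟩ := hUC (ε/2) (by linarith)
  refine ⟨min δ 1, lt_min hδ one_pos, fun t' ht' => ?_⟩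
  have hd1 : dist t' t < δ := lt_of_lt_of_le ht' (min_le_left _ _)
  have hd2 : dist t' t < 1 := lt_of_lt_of_le ht' (min_le_right _ _)
  rw [Real.dist_eq] at hd1 hd2
  have key : ∀ u v : ℝ, |u - t| ≤ 1 → |v - t| ≤ 1 → |u - v| < δ →
      M0 x τmax u ≤ M0 x τmax v + ε/2 := by
    intro u v hu hv huv
    apply Real.sSup_le
    · rintro y ⟨s, hs, rfl⟩
      have habs := abs_le.mp hu
      have habs' := abs_le.mp hv
      simp only [mem_Icc] at hs
      have hsC : t - τmax - 1 ≤ s ∧ s ≤ t + 1 :=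
        ⟨by linarith [habs.1], by linarith [habs.2]⟩
      have hs'C : t - τmax - 1 ≤ s + (v - u) ∧ s + (v - u) ≤ t + 1 :=
        ⟨by linarith [habs'.1], by linarith [habs'.2]⟩
      have hdist : dist s (s + (v - u)) < δ := by
        rw [Real.dist_eq]; rw [abs_sub_comm] at huv ⊢
        simpa using huv
      have := hkey s hsC (s + (v - u)) hs'C hdist
      rw [Real.dist_eq] at this
      have h1 : |x s| ≤ |x (s + (v - u))| + ε/2 := by
        have h2 := abs_abs_sub_abs_le_abs_sub (x s) (x (s + (v - u)))
        nlinarith [abs_le.mp h2]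
      have h2 : |x (s + (v - u))| ≤ M0 x τmax v :=
        le_csSup (M0_bddAbove x hx τmax v) ⟨s + (v - u), ⟨by linarith, by linarith⟩, rfl⟩
      linarith
    · have := M0_nonneg x hx hτ v; linarith
  have h1 := key t' t (by linarith [abs_le.mp hd2.le]) (by simp) hd1
  have h2 := key t t' (by simp) hd2.le (by rw [abs_sub_comm]; exact hd1)
  rw [Real.dist_eq, abs_lt]; constructor <;> linarith

/-- From a Dini-derivative bound, a one-sided growth estimate on `M0`. -/
lemma right_control (x : ℝ → ℝ) (hx : Continuous x) {τmax : ℝ} (hτ : 0 < τmax)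
    {t r c : ℝ} (hc : DiniUpper (fun s => |x s|) t ≤ (c : EReal)) (hcr : c < r)
    (hr0 : 0 ≤ r) :
    ∃ δ > 0, ∀ h : ℝ, 0 < h → h < δ → M0 x τmax (t + h) ≤ M0 x τmax t + r * h := by
  have hlt : Filter.limsup (fun h : ℝ => (((|x (t + h)| - |x t|) / h : ℝ) : EReal))
      (nhdsWithin 0 (Set.Ioi 0)) < (r : EReal) :=
    lt_of_le_of_lt hc (EReal.coe_lt_coe_iff.mpr hcr)
  have hev : ∀ᶠ h in nhdsWithin (0:ℝ) (Ioi 0),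
      (((|x (t + h)| - |x t|) / h : ℝ) : EReal) < (r : EReal) :=
    Filter.eventually_lt_of_limsup_lt hlt
  rw [Filter.eventually_iff, Metric.mem_nhdsWithin_iff] at hev
  obtain ⟨δ, hδ, hsub⟩ := hev
  refine ⟨δ, hδ, fun h h0 hhδ => ?_⟩
  have hslope : ∀ h' : ℝ, 0 < h' → h' ≤ h → |x (t + h')| ≤ |x t| + r * h := by
    intro h' h'0 h'h
    have hmem : h' ∈ Metric.ball (0:ℝ) δ ∩ Ioi 0 := by
      constructor
      · rw [Metric.mem_ball, Real.dist_eq, sub_zero, abs_of_pos h'0]; linarith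
      · exact h'0
    have := hsub hmem
    rw [Set.mem_setOf_eq, EReal.coe_lt_coe_iff, div_lt_iff₀ h'0] at this
    nlinarith
  have hsup : sSup ((fun s => |x s|) '' Icc t (t + h)) ≤ |x t| + r * h := by
    apply innerSup_le x (by linarith) (by positivity)
    intro s hs
    rcases eq_or_lt_of_le hs.1 with heq | hlt'
    · rw [← heq]; nlinarith
    · have := hslope (s - t) (by linarith) (by linarith [hs.2])
      simpa using this
  have hM := abs_le_M0 x hx hτ t
  calc M0 x τmax (t + h) ≤ max (M0 x τmax t) (sSup ((fun s => |x s|) '' Icc t (t + h))) :=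
        M0_le_max x hx hτ (by linarith)
    _ ≤ M0 x τmax t + r * h := max_le (by nlinarith) (by linarith)

/-- One-sided non-growth when the sup is not attained at the right endpoint. -/
lemma right_control_lt (x : ℝ → ℝ) (hx : Continuous x) {τmax : ℝ} (hτ : 0 < τmax)
    {t : ℝ} (hlt : |x t| < M0 x τmax t) :
    ∃ δ > 0, ∀ h : ℝ, 0 < h → h < δ → M0 x τmax (t + h) ≤ M0 x τmax t := by
  have : ∀ᶠ s in nhds t, |x s| < M0 x τmax t :=
    Filter.Tendsto.eventually_lt_const hlt (hx.abs.tendsto t)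
  rw [Filter.eventually_iff, Metric.mem_nhds_iff] at this
  obtain ⟨δ, hδ, hsub⟩ := this
  refine ⟨δ, hδ, fun h h0 hhδ => ?_⟩
  have hsup : sSup ((fun s => |x s|) '' Icc t (t + h)) ≤ M0 x τmax t := by
    apply innerSup_le x (by linarith) (M0_nonneg x hx hτ t)
    intro s hs
    have : s ∈ Metric.ball t δ := by
      rw [Metric.mem_ball, Real.dist_eq, abs_lt]
      constructor <;> [linarith [hs.1]; linarith [hs.2]]
    exact (hsub this).le
  calc M0 x τmax (t + h) ≤ max (M0 x τmax t) (sSup ((fun s => |x s|) '' Icc t (t + h))) :=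
        M0_le_max x hx hτ (by linarith)
    _ ≤ M0 x τmax t := max_le (le_refl _) hsup

set_option maxHeartbeats 2000000 in
/-- **Lemma 2.** For a solution of
`D⁺|x(t)| ≤ -a(t)|x(t)| + b(t) sup_{t-τ_max ≤ s ≤ t} |x(s)|`, and any `0 ≤ t₁ < t₂`,
`M₀(t₂) ≤ M₀(t₁) e^{M_b μ_-(t₁,t₂)}`. -/
theorem M0_growth_estimate (Ma Mb τmax : ℝ) (a b : ℝ → ℝ)
    (hτmax : 0 < τmax)
    (ha : ∀ t ≥ (0 : ℝ), 0 < a t ∧ a t ≤ Ma)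
    (hb : ∀ t ≥ (0 : ℝ), |b t| ≤ Mb)
    (x φ : ℝ → ℝ) (hxcont : Continuous x)
    (hinit : ∀ s ∈ Set.Icc (-τmax) (0 : ℝ), x s = φ s)
    (hineq : ∀ t ≥ (0 : ℝ), DiniUpper (fun s => |x s|) t ≤
      ((-(a t) * |x t| + b t * sSup ((fun s => |x s|) '' Set.Icc (t - τmax) t) : ℝ) : EReal)) :
    ∀ t₁ t₂ : ℝ, 0 ≤ t₁ → t₁ < t₂ →
      M0 x τmax t₂ ≤ M0 x τmax t₁ * Real.exp (Mb * muMinus a b t₁ t₂) := by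
  intro t₁ t₂ ht₁ h12
  set μ := muMinus a b t₁ t₂ with hμdef
  have hMb0 : 0 ≤ Mb := (abs_nonneg _).trans (hb t₁ ht₁)
  have hμ0 : 0 ≤ μ := ENNReal.toReal_nonneg
  suffices key : ∀ ε : ℝ, 0 < ε →
      M0 x τmax t₂ ≤ (M0 x τmax t₁ + ε) * Real.exp (Mb * (μ + ε) + ε * (t₂ - t₁)) by
    set F : ℝ → ℝ := fun ε => (M0 x τmax t₁ + ε) * Real.exp (Mb * (μ + ε) + ε * (t₂ - t₁))
      with hF
    have hFc : ContinuousAt F 0 := by fun_prop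
    have hF0 : F 0 = M0 x τmax t₁ * Real.exp (Mb * μ) := by simp [hF]
    have hT : Filter.Tendsto F (nhdsWithin 0 (Ioi 0)) (nhds (M0 x τmax t₁ * Real.exp (Mb * μ))) := by
      rw [← hF0]; exact hFc.tendsto.mono_left nhdsWithin_le_nhds
    refine ge_of_tendsto hT ?_
    filter_upwards [self_mem_nhdsWithin] with ε hε
    exact key ε hε
  intro ε hε
  -- choose an open superset of the bad set
  set S : Set ℝ := {t ∈ Set.Ioo t₁ t₂ | a t < |b t|} with hS
  have hSfin : volume S ≠ ⊤ := by
    have hle : volume S ≤ volume (Set.Ioo t₁ t₂) := measure_mono (fun z hz => hz.1)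
    exact ne_top_of_le_ne_top (by rw [Real.volume_Ioo]; exact ENNReal.ofReal_ne_top) hle
  have hμS : volume S = ENNReal.ofReal μ := (ENNReal.ofReal_toReal hSfin).symm
  obtain ⟨U₀, hU₀S, hU₀open, hU₀vol⟩ := Set.exists_isOpen_lt_of_lt S
    (volume S + ENNReal.ofReal ε)
    (ENNReal.lt_add_right hSfin (ENNReal.ofReal_pos.mpr hε).ne')
  set U : Set ℝ := U₀ ∩ Set.Ioo t₁ t₂ with hU
  have hUopen : IsOpen U := hU₀open.inter isOpen_Ioo
  have hUS : S ⊆ U := Set.subset_inter hU₀S (fun z hz => hz.1)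
  have hUvol : volume U ≤ ENNReal.ofReal (μ + ε) := by
    calc volume U ≤ volume U₀ := measure_mono Set.inter_subset_left
      _ ≤ volume S + ENNReal.ofReal ε := hU₀vol.le
      _ = ENNReal.ofReal (μ + ε) := by rw [hμS, ← ENNReal.ofReal_add hμ0 hε.le]
  have hUfin : volume U ≠ ⊤ := ne_top_of_le_ne_top ENNReal.ofReal_ne_top hUvol
  set g : ℝ → ℝ := fun t => (volume (U ∩ Set.Ioo t₁ t)).toReal with hg
  have hgfin : ∀ t, volume (U ∩ Set.Ioo t₁ t) ≠ ⊤ :=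
    fun t => ne_top_of_le_ne_top hUfin (measure_mono Set.inter_subset_left)
  have hgmono : Monotone g := by
    intro s t hst
    exact ENNReal.toReal_mono (hgfin t)
      (measure_mono (Set.inter_subset_inter_right _ (Set.Ioo_subset_Ioo le_rfl hst)))
  have hg1 : g t₁ = 0 := by simp [hg]
  have hgub : ∀ t, g t ≤ μ + ε := fun t =>
    ENNReal.toReal_le_of_le_ofReal (by linarith)
      (le_trans (measure_mono Set.inter_subset_left) hUvol)
  have hg0 : ∀ t, 0 ≤ g t := fun t => ENNReal.toReal_nonneg
  have hgLip : ∀ s t : ℝ, s ≤ t → g t ≤ g s + (t - s) := by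
    intro s t hst
    have hsub : U ∩ Set.Ioo t₁ t ⊆ (U ∩ Set.Ioo t₁ s) ∪ Set.Icc s t := by
      rintro z ⟨hzU, hz1, hz2⟩
      rcases lt_or_ge z s with h | h
      · exact Or.inl ⟨hzU, hz1, h⟩
      · exact Or.inr ⟨h, hz2.le⟩
    have hm := (measure_mono (μ := volume) hsub).trans (measure_union_le _ _)
    have := ENNReal.toReal_mono
      (by rw [Real.volume_Icc]; exact ENNReal.add_ne_top.mpr ⟨hgfin s, ENNReal.ofReal_ne_top⟩) hm
    rw [ENNReal.toReal_add (hgfin s) (by rw [Real.volume_Icc]; exact ENNReal.ofReal_ne_top),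
      Real.volume_Icc, ENNReal.toReal_ofReal (by linarith)] at this
    exact this
  have hgcont : Continuous g := by
    have : LipschitzWith 1 g := by
      apply LipschitzWith.of_dist_le_mul
      intro p q
      rw [Real.dist_eq, Real.dist_eq]
      simp only [NNReal.coe_one, one_mul]
      rcases le_total p q with h | h
      · have h1 := hgmono h
        have h2 := hgLip p q h
        have habs : q - p ≤ |p - q| := by rw [abs_sub_comm]; exact le_abs_self _
        rw [abs_le]; constructor <;> linarith
      · have h1 := hgmono h
        have h2 := hgLip q p h
        have habs : p - q ≤ |p - q| := le_abs_self _
        rw [abs_le]; constructor <;> linarith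
    exact this.continuous
  have hggrow : ∀ t ∈ U, ∃ δ > 0, ∀ h : ℝ, 0 < h → h < δ → g t + h ≤ g (t + h) := by
    intro t htU
    obtain ⟨δ, hδ, hball⟩ := Metric.isOpen_iff.mp hUopen t htU
    have ht₁t : t₁ < t := (hU ▸ htU).2.1
    refine ⟨δ, hδ, fun h h0 hhδ => ?_⟩
    have hIoosub : Set.Ioo t (t + h) ⊆ U := by
      intro z hz
      apply hball
      rw [Metric.mem_ball, Real.dist_eq, abs_lt]
      constructor <;> [linarith [hz.1]; linarith [hz.2]]
    have hsub : (U ∩ Set.Ioo t₁ t) ∪ Set.Ioo t (t + h) ⊆ U ∩ Set.Ioo t₁ (t + h) := by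
      rintro z (⟨hzU, hz1, hz2⟩ | hz)
      · exact ⟨hzU, hz1, by linarith⟩
      · exact ⟨hIoosub hz, by linarith [hz.1], hz.2⟩
    have hdisj : Disjoint (U ∩ Set.Ioo t₁ t) (Set.Ioo t (t + h)) := by
      rw [Set.disjoint_left]
      rintro z ⟨_, _, hz2⟩ ⟨hz3, _⟩
      linarith
    have hm := measure_mono (μ := volume) hsub
    rw [measure_union hdisj measurableSet_Ioo] at hm
    have := ENNReal.toReal_mono (hgfin (t + h)) hm
    rw [ENNReal.toReal_add (hgfin t) (by rw [Real.volume_Ioo]; exact ENNReal.ofReal_ne_top),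
      Real.volume_Ioo, add_sub_cancel_left, ENNReal.toReal_ofReal h0.le] at this
    linarith
  -- set up the comparison function
  set K : ℝ := M0 x τmax t₁ + ε with hKdef
  have hK : 0 < K := by
    have := M0_nonneg x hxcont hτmax t₁; simp only [hKdef]; linarith
  set B : ℝ → ℝ := fun t => K * Real.exp (Mb * g t + ε * (t - t₁)) with hB
  have hBcont : Continuous B := by
    apply continuous_const.mul
    exact Real.continuous_exp.comp
      ((continuous_const.mul hgcont).add (continuous_const.mul (continuous_id.sub continuous_const)))
  have hBt₁ : B t₁ = K := by simp [hB, hg1]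
  have hBge : ∀ t, t₁ ≤ t → K ≤ B t := by
    intro t ht
    have h1 : (1:ℝ) ≤ Real.exp (Mb * g t + ε * (t - t₁)) := by
      rw [Real.one_le_exp_iff]
      have := hg0 t
      nlinarith
    simp only [hB]
    nlinarith
  have hBlt : ∀ s z : ℝ, s < z → B s < B z := by
    intro s z hsz
    have := hgmono hsz.le
    simp only [hB]
    apply mul_lt_mul_of_pos_left _ hK
    rw [Real.exp_lt_exp]
    nlinarith
  -- main comparison
  have hcomp : ∀ t ∈ Set.Icc t₁ t₂, M0 x τmax t ≤ B t := by
    apply dini_comparison (M0_continuous x hxcont hτmax).continuousOn hBcont.continuousOn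
    · rw [hBt₁]; simp only [hKdef]; linarith
    · intro t ht heq
      have ht0 : (0:ℝ) ≤ t := le_trans ht₁ ht.1
      have hMt : 0 < M0 x τmax t := lt_of_lt_of_le hK (heq ▸ hBge t ht.1)
      have hxM := abs_le_M0 x hxcont hτmax t
      rcases lt_or_eq_of_le hxM with hlt | heq2
      · -- sup not attained at right endpoint
        obtain ⟨δ, hδ, hP⟩ := right_control_lt x hxcont hτmax hlt
        have hmemδ : t ∈ Ico t (t + δ) := ⟨le_refl t, by linarith⟩
        have hev : ∀ᶠ z in nhdsWithin t (Ioi t), M0 x τmax z < B z := by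
          filter_upwards [Ioo_mem_nhdsGT_of_mem hmemδ] with z hz
          have h1 := hP (z - t) (by linarith [hz.1]) (by linarith [hz.2])
          have h2 : t + (z - t) = z := by ring
          rw [h2] at h1
          calc M0 x τmax z ≤ M0 x τmax t := h1
            _ = B t := heq
            _ < B z := hBlt t z hz.1
        exact hev.frequently
      · -- sup attained at endpoint; use the Dini inequality
        have hc : DiniUpper (fun s => |x s|) t ≤
            ((-(a t) * |x t| + b t * M0 x τmax t : ℝ) : EReal) := hineq t ht0
        have hbt : b t * M0 x τmax t ≤ |b t| * M0 x τmax t :=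
          mul_le_mul_of_nonneg_right (le_abs_self _) hMt.le
        have hat : 0 < a t := (ha t ht0).1
        by_cases htU : t ∈ U
        · -- inside the open set: exponential growth at rate at most Mb
          set r : ℝ := Mb * M0 x τmax t + ε * M0 x τmax t / 2 with hr
          have hr0 : 0 ≤ r := by positivity
          have hcr : -(a t) * |x t| + b t * M0 x τmax t < r := by
            have h1 : |b t| ≤ Mb := hb t ht0
            have h2 : -(a t) * |x t| ≤ 0 := by nlinarith [abs_nonneg (x t)]
            rw [hr]
            nlinarith [mul_le_mul_of_nonneg_right h1 hMt.le, mul_pos hε hMt]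
          obtain ⟨δ₂, hδ₂, hP₂⟩ := right_control x hxcont hτmax hc hcr hr0
          obtain ⟨δ₃, hδ₃, hP₃⟩ := hggrow t htU
          have hmemδ : t ∈ Ico t (t + min δ₂ δ₃) := ⟨le_refl t, by
            have := lt_min hδ₂ hδ₃; linarith⟩
          have hev : ∀ᶠ z in nhdsWithin t (Ioi t), M0 x τmax z < B z := by
            filter_upwards [Ioo_mem_nhdsGT_of_mem hmemδ] with z hz
            have hzt : 0 < z - t := by linarith [hz.1]
            have hzδ₂ : z - t < δ₂ := by
              have := lt_min_iff.mp (show z - t < min δ₂ δ₃ by linarith [hz.2])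
              exact this.1
            have hzδ₃ : z - t < δ₃ := by
              have := lt_min_iff.mp (show z - t < min δ₂ δ₃ by linarith [hz.2])
              exact this.2
            have h1 := hP₂ (z - t) hzt hzδ₂
            have h3 := hP₃ (z - t) hzt hzδ₃
            have h2 : t + (z - t) = z := by ring
            rw [h2] at h1 h3
            -- lower bound on B z
            have hexp1 : Mb * g t + ε * (t - t₁) + (Mb + ε) * (z - t) ≤
                Mb * g z + ε * (z - t₁) := by nlinarith
            have hBz : B t * Real.exp ((Mb + ε) * (z - t)) ≤ B z := by
              simp only [hB]
              rw [mul_assoc, ← Real.exp_add]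
              exact mul_le_mul_of_nonneg_left (Real.exp_le_exp.mpr hexp1) hK.le
            have hone : 1 + (Mb + ε) * (z - t) ≤ Real.exp ((Mb + ε) * (z - t)) := by
              linarith [Real.add_one_le_exp ((Mb + ε) * (z - t))]
            have hBpos : 0 < B t := lt_of_lt_of_le hK (hBge t ht.1)
            have hstep : B t * (1 + (Mb + ε) * (z - t)) ≤ B t * Real.exp ((Mb + ε) * (z - t)) :=
              mul_le_mul_of_nonneg_left hone hBpos.le
            have hBtM : B t = M0 x τmax t := heq.symm
            calc M0 x τmax z ≤ M0 x τmax t + r * (z - t) := h1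
              _ < B t * (1 + (Mb + ε) * (z - t)) := by
                rw [hBtM, hr]; nlinarith [mul_pos (mul_pos hε hMt) hzt]
              _ ≤ B z := le_trans hstep hBz
          exact hev.frequently
        · -- outside: a t ≥ |b t|, no growth
          have htne : t₁ < t := by
            rcases lt_or_eq_of_le ht.1 with h | h
            · exact h
            · exfalso
              rw [← h] at heq
              rw [hBt₁] at heq
              simp only [hKdef] at heq
              linarith
          have htS : t ∉ S := fun hmem => htU (hUS hmem)
          have hab : |b t| ≤ a t := by
            by_contra hcon
            exact htS ⟨⟨htne, ht.2⟩, not_le.mp hcon⟩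
          set r : ℝ := ε * K / 2 with hr
          have hr0 : 0 ≤ r := by positivity
          have hcr : -(a t) * |x t| + b t * M0 x τmax t < r := by
            have h2 : b t ≤ |b t| := le_abs_self _
            have : -(a t) * |x t| + b t * M0 x τmax t ≤ 0 := by
              rw [← heq2]; nlinarith [abs_nonneg (x t)]
            have : 0 < r := by positivity
            linarith
          obtain ⟨δ₂, hδ₂, hP₂⟩ := right_control x hxcont hτmax hc hcr hr0
          have hmemδ : t ∈ Ico t (t + δ₂) := ⟨le_refl t, by linarith⟩
          have hev : ∀ᶠ z in nhdsWithin t (Ioi t), M0 x τmax z < B z := by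
            filter_upwards [Ioo_mem_nhdsGT_of_mem hmemδ] with z hz
            have hzt : 0 < z - t := by linarith [hz.1]
            have h1 := hP₂ (z - t) hzt (by linarith [hz.2])
            have h2 : t + (z - t) = z := by ring
            rw [h2] at h1
            have hexp1 : Mb * g t + ε * (t - t₁) + ε * (z - t) ≤
                Mb * g z + ε * (z - t₁) := by
              have := hgmono (le_of_lt hz.1)
              nlinarith
            have hBz : B t * Real.exp (ε * (z - t)) ≤ B z := by
              simp only [hB]
              rw [mul_assoc, ← Real.exp_add]
              exact mul_le_mul_of_nonneg_left (Real.exp_le_exp.mpr hexp1) hK.le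
            have hone : 1 + ε * (z - t) ≤ Real.exp (ε * (z - t)) := by
              linarith [Real.add_one_le_exp (ε * (z - t))]
            have hBpos : 0 < B t := lt_of_lt_of_le hK (hBge t ht.1)
            have hKB : K ≤ B t := hBge t ht.1
            have hBtM : B t = M0 x τmax t := heq.symm
            calc M0 x τmax z ≤ M0 x τmax t + r * (z - t) := h1
              _ < B t * (1 + ε * (z - t)) := by
                rw [hBtM, hr]
                nlinarith [mul_pos hε hzt, hK, hBtM ▸ hKB]
              _ ≤ B t * Real.exp (ε * (z - t)) := mul_le_mul_of_nonneg_left hone hBpos.le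
              _ ≤ B z := hBz
          exact hev.frequently
  have hfinal := hcomp t₂ ⟨h12.le, le_refl t₂⟩
  calc M0 x τmax t₂ ≤ B t₂ := hfinal
    _ ≤ K * Real.exp (Mb * (μ + ε) + ε * (t₂ - t₁)) := by
      simp only [hB]
      apply mul_le_mul_of_nonneg_left _ hK.le
      rw [Real.exp_le_exp]
      have := hgub t₂
      nlinarith
    _ = (M0 x τmax t₁ + ε) * Real.exp (Mb * (μ + ε) + ε * (t₂ - t₁)) := rfl
end

section
/- Suppose that on the whole interval (t₁, t₂) one has a(t) < |b(t)| (i.e., (t₁,t₂) = S_−(t₁,t₂)). Then a solution x of the delay inequality satisfies |x(t₂)| ≤ |x(t₁)| + M₀(t₁)[e^{M_b (t₂ − t₁)} − 1], where M₀(t) = sup_{t−τ_max ≤ s ≤ t} |x(s)|. -/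
/-- **Lemma 3, case 3.** Suppose `a(t) < |b(t)|` on the whole interval `(t₁,t₂)`
(i.e. `(t₁,t₂) = S_-(t₁,t₂)`). Then a solution of
`D⁺|x(t)| ≤ -a(t)|x(t)| + b(t) sup_{t-τ_max ≤ s ≤ t} |x(s)|` satisfies
`|x(t₂)| ≤ |x(t₁)| + M₀(t₁) [e^{M_b (t₂ - t₁)} - 1]`. -/
theorem estimate_on_Sminus (Ma Mb τmax t₁ t₂ : ℝ) (a b : ℝ → ℝ)
    (hτmax : 0 < τmax)
    (ha : ∀ t ≥ (0 : ℝ), 0 < a t ∧ a t ≤ Ma)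
    (hb : ∀ t ≥ (0 : ℝ), |b t| ≤ Mb)
    (x φ : ℝ → ℝ) (hxcont : Continuous x)
    (hinit : ∀ s ∈ Set.Icc (-τmax) (0 : ℝ), x s = φ s)
    (hineq : ∀ t ≥ (0 : ℝ), DiniUpper (fun s => |x s|) t ≤
      ((-(a t) * |x t| + b t * sSup ((fun s => |x s|) '' Set.Icc (t - τmax) t) : ℝ) : EReal))
    (ht₁ : 0 ≤ t₁) (ht₁₂ : t₁ < t₂)
    (hSminus : ∀ t ∈ Set.Ioo t₁ t₂, a t < |b t|) :
    |x t₂| ≤ |x t₁| + M0 x τmax t₁ * (Real.exp (Mb * (t₂ - t₁)) - 1) := by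
  have hfc : Continuous (fun s => |x s|) := hxcont.abs
  have hfnn : ∀ s : ℝ, 0 ≤ |x s| := fun s => abs_nonneg _
  -- Mb is positive
  have hMb : 0 < Mb := by
    have hmid : (t₁ + t₂) / 2 ∈ Set.Ioo t₁ t₂ := ⟨by linarith, by linarith⟩
    have h0 : (0 : ℝ) ≤ (t₁ + t₂) / 2 := by linarith [hmid.1]
    have h1 := hSminus _ hmid
    have h2 := (ha _ h0).1
    have h3 := hb _ h0
    linarith
  have hbdd : ∀ u v : ℝ, BddAbove ((fun s => |x s|) '' Set.Icc u v) :=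
    fun u v => (isCompact_Icc.image hfc).bddAbove
  have hft₁ : |x t₁| ≤ M0 x τmax t₁ :=
    le_csSup (hbdd _ _) ⟨t₁, ⟨by linarith, le_refl _⟩, rfl⟩
  have hM0nn : 0 ≤ M0 x τmax t₁ := le_trans (hfnn t₁) hft₁
  have hE1 : 1 < Real.exp (Mb * (t₂ - t₁)) := by
    have := Real.add_one_le_exp (Mb * (t₂ - t₁))
    nlinarith
  -- key estimate for each ε > 0
  have key : ∀ ε : ℝ, 0 < ε →
      |x t₂| ≤ |x t₁| + (M0 x τmax t₁ + ε) * (Real.exp (Mb * (t₂ - t₁)) - 1) := by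
    intro ε hε
    set B : ℝ → ℝ :=
      fun t => |x t₁| + (M0 x τmax t₁ + ε) * (Real.exp (Mb * (t - t₁)) - 1) with hBdef
    have hBc : Continuous B := by fun_prop
    have hBmono : ∀ s t : ℝ, s ≤ t → B s ≤ B t := by
      intro s t hst
      have hexp : Real.exp (Mb * (s - t₁)) ≤ Real.exp (Mb * (t - t₁)) :=
        Real.exp_le_exp.mpr (by nlinarith)
      simp only [hBdef]
      nlinarith
    set S : Set ℝ := {t | t ∈ Set.Icc t₁ t₂ ∧ ∀ s ∈ Set.Icc t₁ t, |x s| ≤ B s} with hSdef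
    have ht₁S : t₁ ∈ S := by
      refine ⟨⟨le_refl _, le_of_lt ht₁₂⟩, ?_⟩
      intro s hs
      have hs' : s = t₁ := le_antisymm hs.2 hs.1
      subst hs'
      simp [hBdef]
    have hSne : S.Nonempty := ⟨t₁, ht₁S⟩
    have hSbdd : BddAbove S := ⟨t₂, fun u hu => hu.1.2⟩
    set T := sSup S with hTdef
    have hTle₁ : t₁ ≤ T := le_csSup hSbdd ht₁S
    have hTle₂ : T ≤ t₂ := csSup_le hSne (fun u hu => hu.1.2)
    have hT0 : (0 : ℝ) ≤ T := le_trans ht₁ hTle₁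
    -- all points of [t₁, T) satisfy the bound
    have hIco : ∀ s ∈ Set.Ico t₁ T, |x s| ≤ B s := by
      intro s hs
      obtain ⟨u, huS, hsu⟩ := exists_lt_of_lt_csSup hSne hs.2
      exact huS.2 s ⟨hs.1, le_of_lt hsu⟩
    -- hence all points of [t₁, T] do
    have hTS : ∀ s ∈ Set.Icc t₁ T, |x s| ≤ B s := by
      rcases eq_or_lt_of_le hTle₁ with heq | hlt
      · intro s hs
        have : s = t₁ := le_antisymm (heq ▸ hs.2) hs.1
        subst this
        simp [hBdef]
      · have hclosed : IsClosed {s : ℝ | |x s| ≤ B s} := isClosed_le hfc hBc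
        have hsub : Set.Icc t₁ T ⊆ {s : ℝ | |x s| ≤ B s} := by
          have h1 : closure (Set.Ico t₁ T) = Set.Icc t₁ T := closure_Ico (ne_of_lt hlt)
          rw [← h1]
          exact hclosed.closure_subset_iff.mpr hIco
        exact fun s hs => hsub hs
    -- T must equal t₂
    have hTeq : T = t₂ := by
      by_contra hne
      have hTlt : T < t₂ := lt_of_le_of_ne hTle₂ hne
      -- in both cases we produce u ∈ S with T < u
      have hcontra : ∃ u ∈ S, T < u := by
        rcases lt_or_eq_of_le (hTS T ⟨hTle₁, le_refl _⟩) with hlt | heqTB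
        · -- case |x T| < B T : continuity gives a small right interval
          have hev : ∀ᶠ z in nhds T, |x z| < B z :=
            ContinuousAt.eventually_lt hfc.continuousAt hBc.continuousAt hlt
          rw [Metric.eventually_nhds_iff] at hev
          obtain ⟨δ, hδpos, hδ⟩ := hev
          refine ⟨min (T + δ / 2) t₂, ⟨⟨?_, min_le_right _ _⟩, ?_⟩, ?_⟩
          · exact le_trans hTle₁ (le_min (by linarith) (le_of_lt hTlt))
          · intro s hs
            rcases le_or_gt s T with h1 | h1
            · exact hTS s ⟨hs.1, h1⟩
            · have hs2 : s ≤ T + δ / 2 := le_trans hs.2 (min_le_left _ _)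
              have : dist s T < δ := by
                rw [Real.dist_eq, abs_of_pos (by linarith : (0:ℝ) < s - T)]
                linarith
              exact le_of_lt (hδ this)
          · exact lt_min (by linarith) hTlt
        · -- case |x T| = B T : use the Dini inequality
          set MT := sSup ((fun s => |x s|) '' Set.Icc (T - τmax) T) with hMTdef
          have hMTnn : 0 ≤ MT :=
            le_trans (hfnn T) (le_csSup (hbdd _ _) ⟨T, ⟨by linarith, le_refl _⟩, rfl⟩)
          set ET := Real.exp (Mb * (T - t₁)) with hETdef
          have hET1 : 1 ≤ ET := by
            rw [hETdef]
            have := Real.add_one_le_exp (Mb * (T - t₁))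
            nlinarith
          have hETpos : 0 < ET := lt_of_lt_of_le one_pos hET1
          -- MT < (M0 + ε) * ET
          have hMTbound : MT < (M0 x τmax t₁ + ε) * ET := by
            have hBT : B T < (M0 x τmax t₁ + ε) * ET := by
              simp only [hBdef]
              nlinarith
            have hM0lt : M0 x τmax t₁ < (M0 x τmax t₁ + ε) * ET := by nlinarith
            have hle : MT ≤ max (M0 x τmax t₁) (B T) := by
              apply Real.sSup_le
              · rintro y ⟨s, hs, rfl⟩
                rcases le_or_gt s t₁ with h1 | h1
                · refine le_trans ?_ (le_max_left _ _)
                  exact le_csSup (hbdd _ _) ⟨s, ⟨by linarith [hs.1], h1⟩, rfl⟩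
                · refine le_trans ?_ (le_max_right _ _)
                  exact le_trans (hTS s ⟨le_of_lt h1, hs.2⟩) (hBmono s T hs.2)
              · exact le_trans hM0nn (le_max_left _ _)
            calc MT ≤ max (M0 x τmax t₁) (B T) := hle
              _ < (M0 x τmax t₁ + ε) * ET := max_lt hM0lt hBT
          set r := (M0 x τmax t₁ + ε) * (Mb * ET) with hrdef
          have hcr : -(a T) * |x T| + b T * MT < r := by
            have h1 : -(a T) * |x T| ≤ 0 := by
              have := (ha T hT0).1
              have := hfnn T
              nlinarith
            have h2 : b T * MT ≤ Mb * MT := by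
              have hbT : b T ≤ Mb := le_trans (le_abs_self _) (hb T hT0)
              nlinarith
            have h3 : Mb * MT < r := by
              rw [hrdef]
              nlinarith
            linarith
          have hDini : DiniUpper (fun s => |x s|) T < ((r : ℝ) : EReal) := by
            refine lt_of_le_of_lt (hineq T hT0) ?_
            exact_mod_cast hcr
          have hev : ∀ᶠ h in nhdsWithin 0 (Set.Ioi (0:ℝ)),
              (((|x (T + h)| - |x T|) / h : ℝ) : EReal) < ((r : ℝ) : EReal) :=
            Filter.eventually_lt_of_limsup_lt hDini
          have hev2 : ∀ᶠ h in nhdsWithin 0 (Set.Ioi (0:ℝ)),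
              |x (T + h)| ≤ B (T + h) := by
            filter_upwards [hev, self_mem_nhdsWithin] with h hh hh0
            have hh0' : (0:ℝ) < h := hh0
            have hslope : (|x (T + h)| - |x T|) / h < r := by exact_mod_cast hh
            have h4 : |x (T + h)| - |x T| < r * h := by
              rw [div_lt_iff₀ hh0'] at hslope
              linarith
            have hexp : Real.exp (Mb * (T + h - t₁)) = ET * Real.exp (Mb * h) := by
              rw [hETdef, ← Real.exp_add]
              ring_nf
            have hexp2 : Mb * h + 1 ≤ Real.exp (Mb * h) := Real.add_one_le_exp _
            have hBTh : B T + r * h ≤ B (T + h) := by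
              simp only [hBdef, hexp, hrdef]
              nlinarith
            linarith [heqTB ▸ h4]
          rw [eventually_nhdsWithin_iff, Metric.eventually_nhds_iff] at hev2
          obtain ⟨δ, hδpos, hδ⟩ := hev2
          refine ⟨min (T + δ / 2) t₂, ⟨⟨?_, min_le_right _ _⟩, ?_⟩, ?_⟩
          · exact le_trans hTle₁ (le_min (by linarith) (le_of_lt hTlt))
          · intro s hs
            rcases le_or_gt s T with h1 | h1
            · exact hTS s ⟨hs.1, h1⟩
            · have hs2 : s ≤ T + δ / 2 := le_trans hs.2 (min_le_left _ _)
              have hmem : s - T ∈ Set.Ioi (0:ℝ) := by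
                simp only [Set.mem_Ioi]; linarith
              have hdist : dist (s - T) 0 < δ := by
                rw [Real.dist_eq, sub_zero, abs_of_pos (by linarith : (0:ℝ) < s - T)]
                linarith
              have := hδ hdist hmem
              simp only [Set.mem_Ioi] at hmem
              simpa using this
          · exact lt_min (by linarith) hTlt
      obtain ⟨u, huS, hTu⟩ := hcontra
      exact absurd (le_csSup hSbdd huS) (not_le.mpr hTu)
    have := hTS t₂ ⟨le_of_lt ht₁₂, le_of_eq hTeq.symm⟩
    simpa [hBdef] using this
  -- pass to the limit ε → 0
  have hE1' : 0 < Real.exp (Mb * (t₂ - t₁)) - 1 := by linarith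
  refine le_of_forall_pos_le_add ?_
  intro ε' hε'
  have := key (ε' / (Real.exp (Mb * (t₂ - t₁)) - 1)) (by positivity)
  have heq : (M0 x τmax t₁ + ε' / (Real.exp (Mb * (t₂ - t₁)) - 1)) *
      (Real.exp (Mb * (t₂ - t₁)) - 1)
      = M0 x τmax t₁ * (Real.exp (Mb * (t₂ - t₁)) - 1) + ε' := by
    field_simp
  linarith [heq ▸ this]
end

section
/- Consider the periodic neural network du_i(t)/dt = −d_i(t) u_i(t) + Σ_{j=1}^n a_{ij}(t) g_j(u_j(t)) + Σ_{j=1}^n b_{ij}(t) f_j(u_j(t − τ_{ij}(t))) + I_i(t) with ω-periodic continuous coefficients, bounded delays 0 < τ_{ij}(t) ≤ τ_max, Lipschitz activations with constants G_i, F_i, and bounds 0 ≤ d_i(t) − Σ_{j=1}^n G_j |a_{ij}(t)| ≤ M_a, Σ_{j=1}^n F_j |b_{ij}(t)| ≤ M_b. If d_i(t) − Σ_{j=1}^n |a_{ij}(t)| G_j − Σ_{j=1}^n |b_{ij}(t)| F_j ≥ 0 for all t and all i, and there exists η > 0 such that the set S̄_η = {t ∈ [0,ω] : d_i(t) − Σ_{j=1}^n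 [G_j |a_{ij}(t)| + F_j |b_{ij}(t)|] ≥ η for all i} has positive Lebesgue measure, then the network has an ω-periodic solution which is exponentially asymptotically stable. -/
/-!
For `ω`-periodic `d` with `θ = ∫₀^ω d > 0` and `ω`-periodic `h`, the scalar equation
`y' = -d y + h` has the periodic solution `(1 - e^{-θ})⁻¹ ∫_{t-ω}^t e^{-∫_s^t d} h(s) ds`.
Periodic solutions of the network are the fixed points of the map sending a periodic state `u`
to this solution with `h` the network input of `u`. That input is Lipschitz in the state with
constant `cᵢ = Σⱼ (Gⱼ|aᵢⱼ| + Fⱼ|bᵢⱼ|) ≤ dᵢ`, and the kernel-weighted mass of `cᵢ` over a period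
falls short of that of `dᵢ`, namely `1 - e^{-θᵢ}`, by at least `δ = e^{-θᵢ} ∫₀^ω (dᵢ - cᵢ)`,
which is positive because `dᵢ - cᵢ ≥ η` on a set of positive measure. Hence the map is a
contraction and has a fixed point `x`. For any other solution `u`, variation of constants over
`[t - ω, t]` bounds `|u - x|(t)` by `1 - δ` times its maximum over `[t - ω - τmax, t]`, and such
a contraction over sliding windows forces exponential decay.
-/
open MeasureTheory Set Real Filter Function Topology
open scoped BoundedContinuousFunction

section ScalarEquation

variable {d : ℝ → ℝ} {ω : ℝ}

noncomputable def decayKernel (d : ℝ → ℝ) (s t : ℝ) : ℝ := exp (-∫ r in s..t, d r)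

lemma decayKernel_pos (d : ℝ → ℝ) (s t : ℝ) : 0 < decayKernel d s t := exp_pos _

@[simp] lemma decayKernel_self (d : ℝ → ℝ) (t : ℝ) : decayKernel d t t = 1 := by
  simp [decayKernel]

lemma decayKernel_mul_decayKernel (hd : Continuous d) (r s t : ℝ) :
    decayKernel d r s * decayKernel d s t = decayKernel d r t := by
  rw [decayKernel, decayKernel, decayKernel, ← exp_add, ← neg_add,
    intervalIntegral.integral_add_adjacent_intervals (hd.intervalIntegrable _ _)
      (hd.intervalIntegrable _ _)]

lemma hasDerivAt_decayKernel_left (hd : Continuous d) (s t : ℝ) :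
    HasDerivAt (fun s => decayKernel d s t) (decayKernel d s t * d s) s := by
  have h := (hd.integral_hasStrictDerivAt t s).hasDerivAt.exp
  simpa only [decayKernel, ← intervalIntegral.integral_symm] using h

lemma hasDerivAt_decayKernel_right (hd : Continuous d) (s t : ℝ) :
    HasDerivAt (decayKernel d s) (-d t * decayKernel d s t) t := by
  have h := (hd.integral_hasStrictDerivAt s t).hasDerivAt.neg.exp
  rw [mul_comm] at h
  exact h

lemma continuous_decayKernel_left (hd : Continuous d) (t : ℝ) :
    Continuous fun s => decayKernel d s t :=
  continuous_iff_continuousAt.2 fun s => (hasDerivAt_decayKernel_left hd s t).continuousAt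

lemma decayKernel_le_decayKernel (hd : Continuous d) (hd0 : ∀ r, 0 ≤ d r) {s s' t : ℝ}
    (hss' : s ≤ s') (hs't : s' ≤ t) : decayKernel d s t ≤ decayKernel d s' t := by
  refine exp_le_exp.2 (neg_le_neg ?_)
  exact intervalIntegral.integral_mono_interval hss' hs't le_rfl (Eventually.of_forall hd0)
    (hd.intervalIntegrable _ _)

lemma decayKernel_sub_period (hper : Periodic d ω) (t : ℝ) :
    decayKernel d (t - ω) t = decayKernel d 0 ω := by
  have h := hper.intervalIntegral_add_eq (t - ω) 0
  rw [sub_add_cancel, zero_add] at h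
  rw [decayKernel, decayKernel, h]

lemma decayKernel_add_period (hper : Periodic d ω) (s t : ℝ) :
    decayKernel d (s + ω) (t + ω) = decayKernel d s t := by
  rw [decayKernel, decayKernel, ← intervalIntegral.integral_comp_add_right]
  exact congrArg (fun x => exp (-x)) (intervalIntegral.integral_congr fun r _ => hper r)

lemma integral_decayKernel_mul_self (hd : Continuous d) (p t : ℝ) :
    ∫ s in p..t, decayKernel d s t * d s = 1 - decayKernel d p t := by
  rw [intervalIntegral.integral_eq_sub_of_hasDerivAt (fun s _ => hasDerivAt_decayKernel_left hd s t)
    (((continuous_decayKernel_left hd t).mul hd).intervalIntegrable _ _), decayKernel_self]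

/-- Variation of constants for `y' = -d y + φ`. -/
lemma sub_decayKernel_mul_eq_integral (hd : Continuous d) {y φ : ℝ → ℝ} {p t : ℝ} (hpt : p ≤ t)
    (hy : ContinuousOn y (Icc p t)) (hy' : ∀ s ∈ Ioo p t, HasDerivAt y (-d s * y s + φ s) s)
    (hφ : IntervalIntegrable φ volume p t) :
    y t - decayKernel d p t * y p = ∫ s in p..t, decayKernel d s t * φ s := by
  have hK := continuous_decayKernel_left hd t
  rw [intervalIntegral.integral_eq_sub_of_hasDerivAt_of_le hpt (hK.continuousOn.mul hy)
    (fun s hs => ((hasDerivAt_decayKernel_left hd s t).mul (hy' s hs)).congr_deriv (by ring))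
    (hφ.continuousOn_mul hK.continuousOn)]
  simp

lemma hasDerivAt_integral_decayKernel_mul (hd : Continuous d) {h : ℝ → ℝ} (hh : Continuous h)
    (ω t : ℝ) :
    HasDerivAt (fun t => ∫ s in (t - ω)..t, decayKernel d s t * h s)
      (-d t * (∫ s in (t - ω)..t, decayKernel d s t * h s) +
        (h t - decayKernel d (t - ω) t * h (t - ω))) t := by
  have hF : Continuous fun s => decayKernel d s 0 * h s :=
    (continuous_decayKernel_left hd 0).mul hh
  have key : ∀ t, ∫ s in (t - ω)..t, decayKernel d s t * h s
      = decayKernel d 0 t * ((∫ s in (0 : ℝ)..t, decayKernel d s 0 * h s) -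
        ∫ s in (0 : ℝ)..(t - ω), decayKernel d s 0 * h s) := fun t => by
    rw [intervalIntegral.integral_interval_sub_left (hF.intervalIntegrable _ _)
      (hF.intervalIntegrable _ _), ← intervalIntegral.integral_const_mul]
    refine intervalIntegral.integral_congr fun s _ => ?_
    rw [← decayKernel_mul_decayKernel hd s 0 t]
    ring
  have hΦ := (hasDerivAt_decayKernel_right hd 0 t).mul
    ((hF.integral_hasStrictDerivAt 0 t).hasDerivAt.sub
      ((hF.integral_hasStrictDerivAt 0 (t - ω)).hasDerivAt.comp_sub_const t ω))
  rw [funext key, key]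
  refine hΦ.congr_deriv ?_
  have hinv : decayKernel d t 0 * decayKernel d 0 t = 1 := by
    rw [decayKernel_mul_decayKernel hd, decayKernel_self]
  rw [← decayKernel_mul_decayKernel hd (t - ω) 0 t, Pi.sub_apply]
  linear_combination h t * hinv

noncomputable def periodicSolution (d : ℝ → ℝ) (ω : ℝ) (h : ℝ → ℝ) (t : ℝ) : ℝ :=
  (1 - decayKernel d 0 ω)⁻¹ * ∫ s in (t - ω)..t, decayKernel d s t * h s

lemma continuous_periodicSolution (hd : Continuous d) {h : ℝ → ℝ} (hh : Continuous h) :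
    Continuous (periodicSolution d ω h) :=
  continuous_const.mul <| continuous_iff_continuousAt.2 fun t =>
    (hasDerivAt_integral_decayKernel_mul hd hh ω t).continuousAt

lemma periodicSolution_periodic (hper : Periodic d ω) {h : ℝ → ℝ} (hhper : Periodic h ω) :
    Periodic (periodicSolution d ω h) ω := fun t => by
  have hshift := intervalIntegral.integral_comp_add_right
    (a := t - ω) (b := t) (fun s => decayKernel d s (t + ω) * h s) ω
  rw [sub_add_cancel] at hshift
  rw [periodicSolution, periodicSolution, add_sub_cancel_right, ← hshift]
  congr 1
  refine intervalIntegral.integral_congr fun s _ => ?_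
  rw [decayKernel_add_period hper, hhper]

lemma hasDerivAt_periodicSolution (hd : Continuous d) (hper : Periodic d ω)
    (hθ : decayKernel d 0 ω ≠ 1) {h : ℝ → ℝ} (hh : Continuous h) (hhper : Periodic h ω)
    (t : ℝ) :
    HasDerivAt (periodicSolution d ω h) (-d t * periodicSolution d ω h t + h t) t := by
  refine ((hasDerivAt_integral_decayKernel_mul hd hh ω t).const_mul _).congr_deriv ?_
  rw [periodicSolution, decayKernel_sub_period hper, hhper.sub_eq]
  field_simp [sub_ne_zero.2 hθ.symm]

lemma abs_integral_decayKernel_mul_le (hd : Continuous d) (hω : 0 ≤ ω) {c φ : ℝ → ℝ}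
    (hc : Continuous c) {t D : ℝ} (hφ : ∀ s ∈ Icc (t - ω) t, |φ s| ≤ c s * D) :
    |∫ s in (t - ω)..t, decayKernel d s t * φ s|
      ≤ (∫ s in (t - ω)..t, decayKernel d s t * c s) * D := by
  rw [← intervalIntegral.integral_mul_const]
  refine intervalIntegral.norm_integral_le_of_norm_le (f := fun s => decayKernel d s t * φ s)
    (by linarith) (Eventually.of_forall fun s hs => ?_)
    ((((continuous_decayKernel_left hd t).mul hc).mul continuous_const).intervalIntegrable _ _)
  rw [norm_mul, Real.norm_of_nonneg (decayKernel_pos d s t).le, mul_assoc]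
  exact mul_le_mul_of_nonneg_left (hφ s (Ioc_subset_Icc_self hs)) (decayKernel_pos d s t).le

/-- The kernel-weighted mass of `d` over a period is `1 - decayKernel d 0 ω`, and the kernel is
at least `decayKernel d 0 ω` there, so replacing `d` by `c ≤ d` loses at least
`decayKernel d 0 ω * ∫ (d - c)`. -/
lemma integral_decayKernel_mul_le (hd : Continuous d) (hper : Periodic d ω) (hω : 0 ≤ ω)
    (hd0 : ∀ s, 0 ≤ d s) {c : ℝ → ℝ} (hc : Continuous c) (hcper : Periodic c ω)
    (hcd : ∀ s, c s ≤ d s) (t : ℝ) :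
    ∫ s in (t - ω)..t, decayKernel d s t * c s
      ≤ 1 - decayKernel d 0 ω - decayKernel d 0 ω * ∫ s in (0 : ℝ)..ω, (d s - c s) := by
  have hK := continuous_decayKernel_left hd t
  have hsplit : ∫ s in (t - ω)..t, decayKernel d s t * c s
      = (∫ s in (t - ω)..t, decayKernel d s t * d s)
        - ∫ s in (t - ω)..t, decayKernel d s t * (d s - c s) := by
    rw [← intervalIntegral.integral_sub (f := fun s => decayKernel d s t * d s)
      (g := fun s => decayKernel d s t * (d s - c s)) ((hK.mul hd).intervalIntegrable _ _)
      ((hK.mul (hd.sub hc)).intervalIntegrable _ _)]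
    exact intervalIntegral.integral_congr fun s _ => by ring
  have hgap : decayKernel d 0 ω * ∫ s in (0 : ℝ)..ω, (d s - c s)
      ≤ ∫ s in (t - ω)..t, decayKernel d s t * (d s - c s) := by
    have hmean : ∫ s in (t - ω)..t, (d s - c s) = ∫ s in (0 : ℝ)..ω, (d s - c s) := by
      simpa using (hper.sub hcper).intervalIntegral_add_eq (t - ω) 0
    rw [← hmean, ← intervalIntegral.integral_const_mul]
    refine intervalIntegral.integral_mono_on (by linarith)
      ((continuous_const.mul (hd.sub hc)).intervalIntegrable _ _)
      ((hK.mul (hd.sub hc)).intervalIntegrable _ _) fun s hs => ?_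
    rw [← decayKernel_sub_period hper t]
    exact mul_le_mul_of_nonneg_right (decayKernel_le_decayKernel hd hd0 hs.1 hs.2)
      (sub_nonneg.2 (hcd s))
  rw [hsplit, integral_decayKernel_mul_self hd, decayKernel_sub_period hper]
  linarith

lemma abs_periodicSolution_sub_le (hd : Continuous d) (hω : 0 ≤ ω)
    (hθ : decayKernel d 0 ω < 1) {c h₁ h₂ : ℝ → ℝ} (hc : Continuous c) (hh₁ : Continuous h₁)
    (hh₂ : Continuous h₂) {t δ D : ℝ} (hδ : 0 ≤ δ) (hD : 0 ≤ D)
    (hgap : ∫ s in (t - ω)..t, decayKernel d s t * c s ≤ 1 - decayKernel d 0 ω - δ)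
    (hh : ∀ s ∈ Icc (t - ω) t, |h₁ s - h₂ s| ≤ c s * D) :
    |periodicSolution d ω h₁ t - periodicSolution d ω h₂ t| ≤ (1 - δ) * D := by
  have hK := continuous_decayKernel_left hd t
  have hpos : 0 < 1 - decayKernel d 0 ω := sub_pos.2 hθ
  have hdiff : periodicSolution d ω h₁ t - periodicSolution d ω h₂ t
      = (1 - decayKernel d 0 ω)⁻¹ * ∫ s in (t - ω)..t, decayKernel d s t * (h₁ s - h₂ s) := by
    rw [periodicSolution, periodicSolution, ← mul_sub, ← intervalIntegral.integral_sub
      (f := fun s => decayKernel d s t * h₁ s) (g := fun s => decayKernel d s t * h₂ s)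
      ((hK.mul hh₁).intervalIntegrable _ _) ((hK.mul hh₂).intervalIntegrable _ _)]
    simp only [mul_sub]
  have hint := (abs_integral_decayKernel_mul_le hd hω hc hh).trans
    (mul_le_mul_of_nonneg_right hgap hD)
  rw [hdiff, abs_mul, abs_of_pos (inv_pos.2 hpos), inv_mul_le_iff₀ hpos]
  nlinarith [mul_nonneg (mul_nonneg (decayKernel_pos d 0 ω).le hδ) hD]

end ScalarEquation

theorem exists_continuous_periodic_fixedPoint {E : Type*} [NormedAddCommGroup E] [CompleteSpace E]
    {ω q : ℝ} (hω : ω ≠ 0) (hq0 : 0 ≤ q) (hq1 : q < 1) (T : (ℝ → E) → ℝ → E)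
    (hTc : ∀ x, Continuous x → Continuous (T x)) (hTp : ∀ x, Periodic x ω → Periodic (T x) ω)
    (hTq : ∀ x y, Continuous x → Continuous y → ∀ D, (∀ t, ‖x t - y t‖ ≤ D) →
      ∀ t, ‖T x t - T y t‖ ≤ q * D) :
    ∃ x, Continuous x ∧ Periodic x ω ∧ T x = x := by
  let P : Set (ℝ →ᵇ E) := {w | Periodic w ω}
  have hP : IsClosed P := by
    simp only [P, Periodic, ofPred_forall]
    exact isClosed_iInter fun t => isClosed_eq
      (BoundedContinuousFunction.lipschitz_eval_const _).continuous
      (BoundedContinuousFunction.lipschitz_eval_const _).continuous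
  have := hP.completeSpace_coe
  have : Nonempty P := ⟨⟨0, fun _ => rfl⟩⟩
  have hTP : ∀ w : P, ∃ v : P, ⇑(v : ℝ →ᵇ E) = T w := fun w => by
    have hc := hTc _ (w : ℝ →ᵇ E).continuous
    have hp := hTp _ w.2
    obtain ⟨C, hC⟩ := (hp.compact_of_continuous hω hc).isBounded.exists_norm_le
    exact ⟨⟨.ofNormedAddCommGroup _ hc C fun t => hC _ ⟨t, rfl⟩, hp⟩, rfl⟩
  choose T' hT' using hTP
  have hT'q : ContractingWith q.toNNReal T' := by
    refine ⟨Real.toNNReal_lt_one.2 hq1, LipschitzWith.of_dist_le' fun v w => ?_⟩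
    rw [Subtype.dist_eq, BoundedContinuousFunction.dist_le (mul_nonneg hq0 dist_nonneg)]
    intro t
    rw [dist_eq_norm, hT', hT']
    refine hTq _ _ (v : ℝ →ᵇ E).continuous (w : ℝ →ᵇ E).continuous _ (fun s => ?_) t
    rw [← dist_eq_norm]
    exact BoundedContinuousFunction.dist_coe_le_dist s
  obtain ⟨z, hz⟩ : ∃ z, T' z = z := ⟨_, hT'q.fixedPoint_isFixedPt⟩
  exact ⟨z, (z : ℝ →ᵇ E).continuous, z.2, by rw [← hT', hz]⟩

theorem exists_le_mul_exp_of_le_mul_window {φ : ℝ → ℝ} (hφ : Continuous φ) (hφ0 : ∀ t, 0 ≤ φ t)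
    {α r t₀ : ℝ} (hα : 0 < α) (hr : 0 < r)
    (h : ∀ t ≥ t₀, ∀ D, (∀ s ∈ Icc (t - r) t, φ s ≤ D) → φ t ≤ exp (-(α * r)) * D) :
    ∃ C, ∀ t ≥ t₀ - r, φ t ≤ C * exp (-α * t) := by
  set q := exp (-(α * r))
  have hq1 : q < 1 := exp_lt_one_iff.2 (by nlinarith)
  obtain ⟨B, hB⟩ := (isCompact_Icc (a := t₀ - r) (b := t₀)).bddAbove_image hφ.continuousOn
  have hwin : ∀ k : ℕ, ∀ s ∈ Icc (t₀ + k * r - r) (t₀ + k * r), φ s ≤ q ^ k * B := by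
    intro k
    induction k with
    | zero => simpa using fun s hs => hB ⟨s, hs, rfl⟩
    | succ k ih =>
      push_cast
      obtain ⟨m, hm, hmax⟩ := isCompact_Icc.exists_isMaxOn
        (nonempty_Icc.2 (by linarith : t₀ + (k + 1) * r - r ≤ t₀ + (k + 1) * r)) hφ.continuousOn
      have hB0 : 0 ≤ q ^ k * B := (hφ0 _).trans (ih (t₀ + k * r) ⟨by linarith, le_rfl⟩)
      have hk0 : (0 : ℝ) ≤ k * r := by positivity
      -- `[m - r, m]` lies in windows `k` and `k + 1`, and `m` maximises `φ` on the latter.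
      have hstep : φ m ≤ q * max (q ^ k * B) (φ m) := by
        refine h m (by linarith [hm.1]) _ fun s hs => ?_
        rcases le_total s (t₀ + k * r) with hsk | hsk
        · exact (ih s ⟨by linarith [hm.1, hs.1], hsk⟩).trans (le_max_left _ _)
        · exact (hmax ⟨by linarith, hs.2.trans hm.2⟩ : φ s ≤ φ m).trans (le_max_right _ _)
      have hm_le : φ m ≤ q * (q ^ k * B) := by
        rcases le_total (q ^ k * B) (φ m) with hle | hle
        · rw [max_eq_right hle] at hstep
          have hm0 : φ m ≤ 0 := by nlinarith
          nlinarith [mul_nonneg (exp_pos (-(α * r))).le hB0]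
        · rwa [max_eq_left hle] at hstep
      intro s hs
      calc φ s ≤ φ m := hmax hs
        _ ≤ q * (q ^ k * B) := hm_le
        _ = q ^ (k + 1) * B := by ring
  have hB0 : 0 ≤ B := (hφ0 t₀).trans (hB ⟨t₀, ⟨by linarith, le_rfl⟩, rfl⟩)
  refine ⟨B * exp (α * t₀), fun t ht => ?_⟩
  obtain ⟨k, hk⟩ : ∃ k : ℕ, t ∈ Icc (t₀ + k * r - r) (t₀ + k * r) := by
    refine ⟨⌈(t - t₀) / r⌉₊, ?_, ?_⟩
    · rcases le_total ((t - t₀) / r) 0 with hneg | hpos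
      · rw [Nat.ceil_eq_zero.2 hneg, Nat.cast_zero]
        linarith
      · have := Nat.ceil_lt_add_one hpos
        rw [div_add_one hr.ne', lt_div_iff₀ hr] at this
        linarith
    · have := Nat.le_ceil ((t - t₀) / r)
      rw [div_le_iff₀ hr] at this
      linarith
  have hqk : q ^ k ≤ exp (-α * (t - t₀)) := by
    rw [← exp_nat_mul]
    exact exp_le_exp.2 (by nlinarith [hk.2])
  calc φ t ≤ q ^ k * B := hwin k t hk
    _ ≤ exp (-α * (t - t₀)) * B := mul_le_mul_of_nonneg_right hqk hB0
    _ = B * exp (α * t₀) * exp (-α * t) := by rw [mul_assoc, ← exp_add]; ring_nf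

lemma intervalIntegral_pos_of_volume_pos {γ : ℝ → ℝ} {ω η : ℝ} (hγ : Continuous γ)
    (hγ0 : ∀ t, 0 ≤ γ t) (hη : 0 < η) (hvol : 0 < volume {t ∈ Icc 0 ω | η ≤ γ t}) :
    0 < ∫ t in (0 : ℝ)..ω, γ t := by
  have hω : 0 ≤ ω := by
    by_contra hω
    refine hvol.ne' (measure_mono_null (sep_subset _ _) ?_)
    rw [Icc_eq_empty (by linarith), measure_empty]
  rw [intervalIntegral.integral_of_le hω, ← integral_Icc_eq_integral_Ioc,
    setIntegral_pos_iff_support_of_nonneg_ae (Eventually.of_forall hγ0) hγ.integrableOn_Icc]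
  exact hvol.trans_le (measure_mono fun t ht => ⟨(hη.trans_le ht.2).ne', ht.1⟩)

lemma nonneg_of_abs_sub_le_mul {g : ℝ → ℝ} {G : ℝ} (hg : ∀ x y, |g x - g y| ≤ G * |x - y|) :
    0 ≤ G := by
  simpa using (abs_nonneg _).trans (hg 1 0)

lemma continuous_of_abs_sub_le_mul {g : ℝ → ℝ} {G : ℝ} (hg : ∀ x y, |g x - g y| ≤ G * |x - y|) :
    Continuous g :=
  (LipschitzWith.of_dist_le' (K := G) fun x y => by
    simpa only [Real.dist_eq] using hg x y).continuous

section Network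

variable {ι : Type*} [Fintype ι]

noncomputable def networkInput (a b τ : ι → ι → ℝ → ℝ) (I g f : ι → ℝ → ℝ)
    (x : ι → ℝ → ℝ) (i : ι) (t : ℝ) : ℝ :=
  (∑ j, a i j t * g j (x j t)) + (∑ j, b i j t * f j (x j (t - τ i j t))) + I i t

noncomputable def networkGain (a b : ι → ι → ℝ → ℝ) (G F : ι → ℝ) (i : ι) (t : ℝ) : ℝ :=
  ∑ j, (G j * |a i j t| + F j * |b i j t|)

structure IsPeriodicNetwork (ω : ℝ) (d : ι → ℝ → ℝ) (a b τ : ι → ι → ℝ → ℝ) (I g f : ι → ℝ → ℝ)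
    (G F : ι → ℝ) : Prop where
  continuous_d : ∀ i, Continuous (d i)
  continuous_a : ∀ i j, Continuous (a i j)
  continuous_b : ∀ i j, Continuous (b i j)
  continuous_τ : ∀ i j, Continuous (τ i j)
  continuous_I : ∀ i, Continuous (I i)
  periodic_d : ∀ i, Periodic (d i) ω
  periodic_a : ∀ i j, Periodic (a i j) ω
  periodic_b : ∀ i j, Periodic (b i j) ω
  periodic_τ : ∀ i j, Periodic (τ i j) ω
  periodic_I : ∀ i, Periodic (I i) ω
  abs_sub_g_le : ∀ j x y, |g j x - g j y| ≤ G j * |x - y|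
  abs_sub_f_le : ∀ j x y, |f j x - f j y| ≤ F j * |x - y|

namespace IsPeriodicNetwork

variable {ω : ℝ} {d : ι → ℝ → ℝ} {a b τ : ι → ι → ℝ → ℝ} {I g f : ι → ℝ → ℝ} {G F : ι → ℝ}

lemma networkGain_nonneg (hN : IsPeriodicNetwork ω d a b τ I g f G F) (i : ι) (t : ℝ) :
    0 ≤ networkGain a b G F i t :=
  Finset.sum_nonneg fun j _ => add_nonneg
    (mul_nonneg (nonneg_of_abs_sub_le_mul (hN.abs_sub_g_le j)) (abs_nonneg _))
    (mul_nonneg (nonneg_of_abs_sub_le_mul (hN.abs_sub_f_le j)) (abs_nonneg _))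

lemma continuous_networkGain (hN : IsPeriodicNetwork ω d a b τ I g f G F) (i : ι) :
    Continuous (networkGain a b G F i) :=
  continuous_finsetSum _ fun j _ =>
    (continuous_const.mul (hN.continuous_a i j).abs).add
      (continuous_const.mul (hN.continuous_b i j).abs)

lemma periodic_networkGain (hN : IsPeriodicNetwork ω d a b τ I g f G F) (i : ι) :
    Periodic (networkGain a b G F i) ω := fun t => by
  simp only [networkGain, hN.periodic_a i _ t, hN.periodic_b i _ t]

lemma continuous_networkInput (hN : IsPeriodicNetwork ω d a b τ I g f G F) {x : ι → ℝ → ℝ}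
    (hx : ∀ j, Continuous (x j)) (i : ι) : Continuous (networkInput a b τ I g f x i) := by
  have hg := fun j => continuous_of_abs_sub_le_mul (hN.abs_sub_g_le j)
  have hf := fun j => continuous_of_abs_sub_le_mul (hN.abs_sub_f_le j)
  refine ((continuous_finsetSum _ fun j _ => ?_).add
    (continuous_finsetSum _ fun j _ => ?_)).add (hN.continuous_I i)
  · exact (hN.continuous_a i j).mul ((hg j).comp (hx j))
  · exact (hN.continuous_b i j).mul
      ((hf j).comp ((hx j).comp (continuous_id.sub (hN.continuous_τ i j))))

lemma periodic_networkInput (hN : IsPeriodicNetwork ω d a b τ I g f G F) {x : ι → ℝ → ℝ}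
    (hx : ∀ j, Periodic (x j) ω) (i : ι) : Periodic (networkInput a b τ I g f x i) ω := fun t => by
  have hlag : ∀ j, t + ω - τ i j (t + ω) = t - τ i j t + ω := fun j => by
    rw [hN.periodic_τ i j t]; ring
  simp only [networkInput, hN.periodic_a i _ t, hN.periodic_b i _ t, hN.periodic_I i t, hx _ t,
    hlag, hx _ (t - τ i _ t)]

lemma abs_networkInput_sub_le (hN : IsPeriodicNetwork ω d a b τ I g f G F) {x y : ι → ℝ → ℝ}
    {i : ι} {s D : ℝ} (hnow : ∀ j, |x j s - y j s| ≤ D)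
    (hlag : ∀ j, |x j (s - τ i j s) - y j (s - τ i j s)| ≤ D) :
    |networkInput a b τ I g f x i s - networkInput a b τ I g f y i s|
      ≤ networkGain a b G F i s * D := by
  have hlip : ∀ {φ : ℝ → ℝ} {K c u v : ℝ}, (∀ x y, |φ x - φ y| ≤ K * |x - y|) → |u - v| ≤ D →
      |c * (φ u - φ v)| ≤ K * |c| * D := fun {φ K c u v} hφ huv => by
    rw [abs_mul, mul_comm K, mul_assoc]
    exact mul_le_mul_of_nonneg_left ((hφ _ _).trans
      (mul_le_mul_of_nonneg_left huv (nonneg_of_abs_sub_le_mul hφ))) (abs_nonneg _)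
  have hterm : ∀ j, |a i j s * (g j (x j s) - g j (y j s)) +
      b i j s * (f j (x j (s - τ i j s)) - f j (y j (s - τ i j s)))|
      ≤ (G j * |a i j s| + F j * |b i j s|) * D := fun j =>
    (abs_add_le _ _).trans <| (add_le_add (hlip (hN.abs_sub_g_le j) (hnow j))
      (hlip (hN.abs_sub_f_le j) (hlag j))).trans_eq (by ring)
  calc |networkInput a b τ I g f x i s - networkInput a b τ I g f y i s|
      = |∑ j, (a i j s * (g j (x j s) - g j (y j s)) +
          b i j s * (f j (x j (s - τ i j s)) - f j (y j (s - τ i j s))))| := by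
        simp only [networkInput, mul_sub, Finset.sum_add_distrib, Finset.sum_sub_distrib]
        ring_nf
    _ ≤ ∑ j, (G j * |a i j s| + F j * |b i j s|) * D :=
        (Finset.abs_sum_le_sum_abs _ _).trans (Finset.sum_le_sum fun j _ => hterm j)
    _ = networkGain a b G F i s * D := by rw [networkGain, Finset.sum_mul]

theorem exists_uniform_gap (hN : IsPeriodicNetwork ω d a b τ I g f G F) (hω : 0 ≤ ω)
    (hdom : ∀ i t, networkGain a b G F i t ≤ d i t)
    (hgap : ∀ i, 0 < ∫ t in (0 : ℝ)..ω, (d i t - networkGain a b G F i t)) :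
    ∃ δ, 0 < δ ∧ δ < 1 ∧ ∀ i t, ∫ s in (t - ω)..t, decayKernel (d i) s t * networkGain a b G F i s
      ≤ 1 - decayKernel (d i) 0 ω - δ := by
  -- each component admits every small enough `δ`, and there are finitely many components
  have hδi : ∀ i, ∀ᶠ δ in 𝓝[>] (0 : ℝ), ∀ t,
      ∫ s in (t - ω)..t, decayKernel (d i) s t * networkGain a b G F i s
        ≤ 1 - decayKernel (d i) 0 ω - δ := fun i => by
    filter_upwards [Ioo_mem_nhdsGT (mul_pos (decayKernel_pos (d i) 0 ω) (hgap i))] with δ hδ t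
    refine (integral_decayKernel_mul_le (hN.continuous_d i) (hN.periodic_d i) hω
      (fun s => (hN.networkGain_nonneg i s).trans (hdom i s)) (hN.continuous_networkGain i)
      (hN.periodic_networkGain i) (hdom i) t).trans ?_
    linarith [hδ.2]
  obtain ⟨δ, hδ, hδ01⟩ := ((eventually_all.2 hδi).and (Ioo_mem_nhdsGT one_pos)).exists
  exact ⟨δ, hδ01.1, hδ01.2, hδ⟩

theorem exists_periodic_solution (hN : IsPeriodicNetwork ω d a b τ I g f G F) (hω : 0 < ω)
    {δ : ℝ} (hδ0 : 0 < δ) (hδ1 : δ < 1)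
    (hgap : ∀ i t, ∫ s in (t - ω)..t, decayKernel (d i) s t * networkGain a b G F i s
      ≤ 1 - decayKernel (d i) 0 ω - δ) :
    ∃ x : ι → ℝ → ℝ, (∀ i, Continuous (x i)) ∧ (∀ i, Periodic (x i) ω) ∧
      ∀ i t, HasDerivAt (x i) (-d i t * x i t + networkInput a b τ I g f x i t) t := by
  have hK : ∀ i, decayKernel (d i) 0 ω < 1 := fun i => by
    have := intervalIntegral.integral_nonneg (μ := volume) (by linarith : (0 : ℝ) - ω ≤ 0)
      fun s _ =>
      mul_nonneg (decayKernel_pos (d i) s 0).le (hN.networkGain_nonneg i s)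
    linarith [hgap i 0]
  obtain ⟨X, hXc, hXp, hXT⟩ := exists_continuous_periodic_fixedPoint hω.ne' (q := 1 - δ)
    (by linarith) (by linarith)
    (fun (X : ℝ → ι → ℝ) t i =>
      periodicSolution (d i) ω (networkInput a b τ I g f (fun j s => X s j) i) t)
    (fun X hX => continuous_pi fun i => continuous_periodicSolution (hN.continuous_d i)
      (hN.continuous_networkInput (fun j => (continuous_apply j).comp hX) i))
    (fun X hX t => funext fun i => periodicSolution_periodic (hN.periodic_d i)
      (hN.periodic_networkInput (fun j s => congrFun (hX s) j) i) t)
    (fun X Y hX hY D hD t => by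
      have hXY : ∀ s j, |X s j - Y s j| ≤ D := fun s j => by
        simpa using (norm_le_pi_norm (X s - Y s) j).trans (hD s)
      refine (pi_norm_le_iff_of_nonneg (mul_nonneg (by linarith) ((norm_nonneg _).trans
        (hD 0)))).2 fun i => ?_
      rw [Real.norm_eq_abs, Pi.sub_apply]
      exact abs_periodicSolution_sub_le (hN.continuous_d i) hω.le (hK i)
        (hN.continuous_networkGain i)
        (hN.continuous_networkInput (fun j => (continuous_apply j).comp hX) i)
        (hN.continuous_networkInput (fun j => (continuous_apply j).comp hY) i) hδ0.le
        ((norm_nonneg _).trans (hD 0)) (hgap i t) fun s _ =>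
          hN.abs_networkInput_sub_le (fun j => hXY s j) (fun j => hXY _ j))
  have hfix : ∀ i, periodicSolution (d i) ω (networkInput a b τ I g f (fun j s => X s j) i)
      = fun t => X t i := fun i => funext fun t => congrFun (congrFun hXT t) i
  have hxc : ∀ j, Continuous fun s => X s j := fun j => (continuous_apply j).comp hXc
  refine ⟨fun i t => X t i, hxc, fun i t => congrFun (hXp t) i, fun i t => ?_⟩
  have := hasDerivAt_periodicSolution (hN.continuous_d i) (hN.periodic_d i) (hK i).ne
    (hN.continuous_networkInput hxc i)
    (hN.periodic_networkInput (fun j s => congrFun (hXp s) j) i) t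
  rwa [hfix i] at this

theorem abs_sub_le_of_window (hN : IsPeriodicNetwork ω d a b τ I g f G F) (hω : 0 ≤ ω)
    {τmax : ℝ} (hτ0 : ∀ i j t, 0 ≤ τ i j t) (hτmax : ∀ i j t, τ i j t ≤ τmax) {δ : ℝ}
    (hgap : ∀ i t, ∫ s in (t - ω)..t, decayKernel (d i) s t * networkGain a b G F i s
      ≤ 1 - decayKernel (d i) 0 ω - δ)
    {u v : ι → ℝ → ℝ} (hu : ∀ i, Continuous (u i))
    (hu' : ∀ i, ∀ t > 0, HasDerivAt (u i) (-d i t * u i t + networkInput a b τ I g f u i t) t)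
    (hv : ∀ i, Continuous (v i))
    (hv' : ∀ i, ∀ t > 0, HasDerivAt (v i) (-d i t * v i t + networkInput a b τ I g f v i t) t)
    {t D : ℝ} (ht : ω ≤ t) (hD : ∀ s ∈ Icc (t - (ω + τmax)) t, ∀ j, |u j s - v j s| ≤ D)
    (i : ι) : |u i t - v i t| ≤ (1 - δ) * D := by
  have hτi : 0 ≤ τmax := (hτ0 i i t).trans (hτmax i i t)
  have hD0 : 0 ≤ D := (abs_nonneg _).trans (hD t ⟨by linarith, le_rfl⟩ i)
  have hvoc := sub_decayKernel_mul_eq_integral (hN.continuous_d i) (y := fun s => u i s - v i s)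
    (φ := fun s => networkInput a b τ I g f u i s - networkInput a b τ I g f v i s)
    (by linarith : t - ω ≤ t) ((hu i).sub (hv i)).continuousOn
    (fun s hs => ((hu' i s (by linarith [hs.1])).sub (hv' i s (by linarith [hs.1]))).congr_deriv
      (by ring))
    (((hN.continuous_networkInput hu i).sub (hN.continuous_networkInput hv i)).intervalIntegrable
      _ _)
  rw [decayKernel_sub_period (hN.periodic_d i)] at hvoc
  have hint := (abs_integral_decayKernel_mul_le (hN.continuous_d i) hω
    (hN.continuous_networkGain i) fun s hs => hN.abs_networkInput_sub_le
      (fun j => hD s ⟨by linarith [hs.1], hs.2⟩ j)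
      (fun j => hD _ ⟨by linarith [hs.1, hτmax i j s], by linarith [hs.2, hτ0 i j s]⟩ j)).trans
    (mul_le_mul_of_nonneg_right (hgap i t) hD0)
  have hK := decayKernel_pos (d i) 0 ω
  calc |u i t - v i t|
      = |decayKernel (d i) 0 ω * (u i (t - ω) - v i (t - ω)) + ∫ s in (t - ω)..t,
          decayKernel (d i) s t *
            (networkInput a b τ I g f u i s - networkInput a b τ I g f v i s)| := by
        rw [← hvoc, add_sub_cancel]
    _ ≤ decayKernel (d i) 0 ω * D + (1 - decayKernel (d i) 0 ω - δ) * D := by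
        refine (abs_add_le _ _).trans (add_le_add ?_ hint)
        rw [abs_mul, abs_of_pos hK]
        exact mul_le_mul_of_nonneg_left (hD _ ⟨by linarith, by linarith⟩ i) hK.le
    _ = (1 - δ) * D := by ring

theorem exists_norm_sub_le_mul_exp (hN : IsPeriodicNetwork ω d a b τ I g f G F) (hω : 0 < ω)
    {τmax : ℝ} (hτmax0 : 0 ≤ τmax) (hτ0 : ∀ i j t, 0 ≤ τ i j t) (hτmax : ∀ i j t, τ i j t ≤ τmax)
    {δ : ℝ} (hδ0 : 0 < δ)
    (hgap : ∀ i t, ∫ s in (t - ω)..t, decayKernel (d i) s t * networkGain a b G F i s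
      ≤ 1 - decayKernel (d i) 0 ω - δ)
    {u v : ι → ℝ → ℝ} (hu : ∀ i, Continuous (u i))
    (hu' : ∀ i, ∀ t > 0, HasDerivAt (u i) (-d i t * u i t + networkInput a b τ I g f u i t) t)
    (hv : ∀ i, Continuous (v i))
    (hv' : ∀ i, ∀ t > 0, HasDerivAt (v i) (-d i t * v i t + networkInput a b τ I g f v i t) t) :
    ∃ C, ∀ t ≥ 0, ‖fun i => u i t - v i t‖ ≤ C * exp (-(δ / (ω + τmax)) * t) := by
  have hr : 0 < ω + τmax := by linarith
  obtain ⟨C, hC⟩ := exists_le_mul_exp_of_le_mul_window (t₀ := ω)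
    (φ := fun t => ‖fun i => u i t - v i t‖) (continuous_pi fun i => (hu i).sub (hv i)).norm
    (fun _ => norm_nonneg _) (div_pos hδ0 hr) hr fun t ht D hD => by
      have hD0 : 0 ≤ D := (norm_nonneg _).trans (hD t ⟨by linarith, le_rfl⟩)
      rw [div_mul_cancel₀ _ hr.ne', pi_norm_le_iff_of_nonneg (by positivity)]
      refine fun i => (hN.abs_sub_le_of_window hω.le hτ0 hτmax hgap hu hu' hv hv' ht (D := D)
        (fun s hs j => ?_) i).trans ?_
      · simpa using (norm_le_pi_norm (fun i => u i s - v i s) j).trans (hD s hs)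
      · exact mul_le_mul_of_nonneg_right (by linarith [add_one_le_exp (-δ)]) hD0
  exact ⟨C, fun t ht => hC t (by linarith)⟩

end IsPeriodicNetwork

end Network

theorem periodic_network_corollary_general
    (n : ℕ) (ω τmax : ℝ)
    (hω : 0 < ω) (hτmax : 0 < τmax)
    (d : Fin n → ℝ → ℝ) (a b : Fin n → Fin n → ℝ → ℝ) (τd : Fin n → Fin n → ℝ → ℝ)
    (I : Fin n → ℝ → ℝ) (g f : Fin n → ℝ → ℝ) (G F : Fin n → ℝ)
    (hdcont : ∀ i, Continuous (d i)) (hacont : ∀ i j, Continuous (a i j))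
    (hbcont : ∀ i j, Continuous (b i j)) (hτcont : ∀ i j, Continuous (τd i j))
    (hIcont : ∀ i, Continuous (I i))
    (hdper : ∀ i (t : ℝ), d i (t + ω) = d i t)
    (haper : ∀ i j (t : ℝ), a i j (t + ω) = a i j t)
    (hbper : ∀ i j (t : ℝ), b i j (t + ω) = b i j t)
    (hτper : ∀ i j (t : ℝ), τd i j (t + ω) = τd i j t)
    (hIper : ∀ i (t : ℝ), I i (t + ω) = I i t)
    (hτd : ∀ i j (t : ℝ), 0 < τd i j t ∧ τd i j t ≤ τmax)
    (hg : ∀ i (x h : ℝ), |g i (x + h) - g i x| ≤ G i * |h|)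
    (hf : ∀ i (x h : ℝ), |f i (x + h) - f i x| ≤ F i * |h|)
    (hnonneg : ∀ i (t : ℝ),
      0 ≤ d i t - (∑ j, |a i j t| * G j) - ∑ j, |b i j t| * F j)
    (hμη : ∃ η > (0 : ℝ), 0 < MeasureTheory.volume
      {t ∈ Set.Icc (0 : ℝ) ω |
        ∀ i, η ≤ d i t - ∑ j, (G j * |a i j t| + F j * |b i j t|)}) :
    ∃ x : Fin n → ℝ → ℝ,
      (∀ i, Continuous (x i)) ∧
      (∀ i (t : ℝ), HasDerivAt (x i)
        (-(d i t) * x i t + (∑ j, a i j t * g j (x j t)) +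
          (∑ j, b i j t * f j (x j (t - τd i j t))) + I i t) t) ∧
      (∀ i (t : ℝ), x i (t + ω) = x i t) ∧
      ∃ α > (0 : ℝ), ∀ u : Fin n → ℝ → ℝ,
        (∀ i, Continuous (u i)) →
        (∀ i, ∀ t > (0 : ℝ), HasDerivAt (u i)
          (-(d i t) * u i t + (∑ j, a i j t * g j (u j t)) +
            (∑ j, b i j t * f j (u j (t - τd i j t))) + I i t) t) →
        ∃ C : ℝ, ∀ t ≥ (0 : ℝ),
          ‖(fun i => u i t - x i t : Fin n → ℝ)‖ ≤ C * Real.exp (-α * t) := by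
  have hN : IsPeriodicNetwork ω d a b τd I g f G F :=
    ⟨hdcont, hacont, hbcont, hτcont, hIcont, hdper, haper, hbper, hτper, hIper,
      fun j x y => by simpa using hg j y (x - y), fun j x y => by simpa using hf j y (x - y)⟩
  have hdom : ∀ i t, networkGain a b G F i t ≤ d i t := fun i t => by
    have := hnonneg i t
    simp only [networkGain, Finset.sum_add_distrib, mul_comm (G _), mul_comm (F _)]
    linarith
  obtain ⟨η, hη, hvol⟩ := hμη
  obtain ⟨δ, hδ0, hδ1, hgap⟩ := hN.exists_uniform_gap hω.le hdom fun i =>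
    intervalIntegral_pos_of_volume_pos ((hdcont i).sub (hN.continuous_networkGain i))
      (fun t => sub_nonneg.2 (hdom i t)) hη
      (hvol.trans_le (measure_mono fun t ht => ⟨ht.1, ht.2 i⟩))
  obtain ⟨x, hxc, hxper, hx'⟩ := hN.exists_periodic_solution hω hδ0 hδ1 hgap
  refine ⟨x, hxc, fun i t => by simpa only [networkInput, add_assoc] using hx' i t, hxper,
    δ / (ω + τmax), by positivity, fun u hu hu' => ?_⟩
  exact hN.exists_norm_sub_le_mul_exp hω hτmax.le (fun i j t => (hτd i j t).1.le)
    (fun i j t => (hτd i j t).2) hδ0 hgap hu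
    (fun i t ht => by simpa only [networkInput, add_assoc] using hu' i t ht) hxc
    fun i t _ => hx' i t

/-- **Periodic neural networks (Corollary 3).** Consider
`u̇ᵢ(t) = -dᵢ(t) uᵢ(t) + Σⱼ aᵢⱼ(t) gⱼ(uⱼ(t)) + Σⱼ bᵢⱼ(t) fⱼ(uⱼ(t - τᵢⱼ(t))) + Iᵢ(t)` with
continuous `ω`-periodic coefficients, `dᵢ(t) > dᵢ > 0`, `0 < τᵢⱼ(t) ≤ τ_max`, Lipschitz
activations (`Gᵢ`, `Fᵢ`), `0 ≤ dᵢ(t) - Σⱼ Gⱼ|aᵢⱼ(t)| ≤ M_a`, `Σⱼ Fⱼ|bᵢⱼ(t)| ≤ M_b`.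
If `dᵢ(t) - Σⱼ |aᵢⱼ(t)| Gⱼ - Σⱼ |bᵢⱼ(t)| Fⱼ ≥ 0` for all `t, i` and there exists `η > 0`
such that `S̄_η = {t ∈ [0,ω] : ∀ i, dᵢ(t) - Σⱼ (Gⱼ|aᵢⱼ(t)| + Fⱼ|bᵢⱼ(t)|) ≥ η}` has
positive Lebesgue measure, then the network has an `ω`-periodic solution which is
exponentially asymptotically stable. -/
theorem periodic_network_corollary
    (n : ℕ) (hn : 0 < n) (ω τmax Ma Mb : ℝ)
    (hω : 0 < ω) (hτmax : 0 < τmax)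
    (d : Fin n → ℝ → ℝ) (a b : Fin n → Fin n → ℝ → ℝ) (τd : Fin n → Fin n → ℝ → ℝ)
    (I : Fin n → ℝ → ℝ) (g f : Fin n → ℝ → ℝ) (G F dl : Fin n → ℝ)
    (hdcont : ∀ i, Continuous (d i)) (hacont : ∀ i j, Continuous (a i j))
    (hbcont : ∀ i j, Continuous (b i j)) (hτcont : ∀ i j, Continuous (τd i j))
    (hIcont : ∀ i, Continuous (I i))
    (hdper : ∀ i (t : ℝ), d i (t + ω) = d i t)
    (haper : ∀ i j (t : ℝ), a i j (t + ω) = a i j t)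
    (hbper : ∀ i j (t : ℝ), b i j (t + ω) = b i j t)
    (hτper : ∀ i j (t : ℝ), τd i j (t + ω) = τd i j t)
    (hIper : ∀ i (t : ℝ), I i (t + ω) = I i t)
    (hdl : ∀ i, 0 < dl i) (hd : ∀ i (t : ℝ), dl i < d i t)
    (hτd : ∀ i j (t : ℝ), 0 < τd i j t ∧ τd i j t ≤ τmax)
    (hg : ∀ i (x h : ℝ), |g i (x + h) - g i x| ≤ G i * |h|)
    (hf : ∀ i (x h : ℝ), |f i (x + h) - f i x| ≤ F i * |h|)
    (hMa : ∀ i (t : ℝ), 0 ≤ d i t - ∑ j, G j * |a i j t| ∧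
      d i t - ∑ j, G j * |a i j t| ≤ Ma)
    (hMb : ∀ i (t : ℝ), ∑ j, F j * |b i j t| ≤ Mb)
    (hnonneg : ∀ i (t : ℝ),
      0 ≤ d i t - (∑ j, |a i j t| * G j) - ∑ j, |b i j t| * F j)
    (hμη : ∃ η > (0 : ℝ), 0 < MeasureTheory.volume
      {t ∈ Set.Icc (0 : ℝ) ω |
        ∀ i, η ≤ d i t - ∑ j, (G j * |a i j t| + F j * |b i j t|)}) :
    ∃ x : Fin n → ℝ → ℝ,
      (∀ i, Continuous (x i)) ∧
      (∀ i (t : ℝ), HasDerivAt (x i)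
        (-(d i t) * x i t + (∑ j, a i j t * g j (x j t)) +
          (∑ j, b i j t * f j (x j (t - τd i j t))) + I i t) t) ∧
      (∀ i (t : ℝ), x i (t + ω) = x i t) ∧
      ∃ α > (0 : ℝ), ∀ u : Fin n → ℝ → ℝ,
        (∀ i, Continuous (u i)) →
        (∀ i, ∀ t > (0 : ℝ), HasDerivAt (u i)
          (-(d i t) * u i t + (∑ j, a i j t * g j (u j t)) +
            (∑ j, b i j t * f j (u j (t - τd i j t))) + I i t) t) →
        ∃ C : ℝ, ∀ t ≥ (0 : ℝ),
          ‖(fun i => u i t - x i t : Fin n → ℝ)‖ ≤ C * Real.exp (-α * t) :=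
  periodic_network_corollary_general n ω τmax hω hτmax d a b τd I g f G F hdcont hacont hbcont
    hτcont hIcont hdper haper hbper hτper hIper hτd hg hf hnonneg hμη
end
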